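/- arXiv:1705.08092 — 9 statements merged into one kernel-verified Lean document; each statement's English description precedes it below -/
import Mathlib

section
/- Let K, N, t be natural numbers with 1 ≤ t and t + 1 ≤ K, and let d : Fin K → Fin N be any function. Let X₁ and X₂ be two distinct (t+1)-element Finsets of Fin K. Then there is at most one pair (x₁, x₂) ∈ X₁ × X₂ with x₁ ≠ x₂ such that d x₁ = d x₂ and X₁.erase x₁ = X₂.erase x₂; that is, the cardinality of the set of such pairs is at most 1. (Equivalently: any two distinct transmissions of the keyless scheme have at most one summand share in common.) -/
/-- Any two distinct transmissions of the keyless scheme have at most one summand share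
in common: for distinct `(t+1)`-element sets `X₁ X₂`, there is at most one pair
`(x₁, x₂) ∈ X₁ × X₂` with `x₁ ≠ x₂`, `d x₁ = d x₂` and `X₁.erase x₁ = X₂.erase x₂`. -/
theorem at_most_one_common_share
    (K N t : ℕ) (ht : 1 ≤ t) (htK : t + 1 ≤ K) (d : Fin K → Fin N)
    (X₁ X₂ : Finset (Fin K)) (hX₁ : X₁.card = t + 1) (hX₂ : X₂.card = t + 1)
    (hne : X₁ ≠ X₂) :
    ((X₁ ×ˢ X₂).filter
      (fun p => p.1 ≠ p.2 ∧ d p.1 = d p.2 ∧ X₁.erase p.1 = X₂.erase p.2)).card ≤ 1 := by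
  rw [Finset.card_le_one]
  intro p hp q hq
  simp only [Finset.mem_filter, Finset.mem_product] at hp hq
  obtain ⟨⟨hp1, hp2⟩, hpne, -, hpe⟩ := hp
  obtain ⟨⟨hq1, hq2⟩, hqne, -, hqe⟩ := hq
  -- first coords not in X₂
  have hp1n : p.1 ∉ X₂ := fun h => by
    have : p.1 ∈ X₁.erase p.1 := by
      rw [hpe]; exact Finset.mem_erase.2 ⟨hpne, h⟩
    exact (Finset.notMem_erase _ _) this
  have hq1n : q.1 ∉ X₂ := fun h => by
    have : q.1 ∈ X₁.erase q.1 := by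
      rw [hqe]; exact Finset.mem_erase.2 ⟨hqne, h⟩
    exact (Finset.notMem_erase _ _) this
  have h1 : p.1 = q.1 := by
    by_contra h
    have : q.1 ∈ X₂.erase p.2 := by
      rw [← hpe]; exact Finset.mem_erase.2 ⟨fun hh => h hh.symm, hq1⟩
    exact hq1n (Finset.mem_of_mem_erase this)
  have h2 : p.2 = q.2 := by
    by_contra h
    have heq : X₂.erase p.2 = X₂.erase q.2 := by rw [← hpe, ← hqe, h1]
    have : p.2 ∈ X₂.erase p.2 := by
      rw [heq]; exact Finset.mem_erase.2 ⟨h, hp2⟩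
    exact (Finset.notMem_erase _ _) this
  exact Prod.ext h1 h2
end

section
/- Let K, N, t be natural numbers with 1 ≤ t and t + 1 ≤ K, let d : Fin K → Fin N, and let U be a leader set for d. Let A be a (t+1)-element Finset of Fin K with A ∩ U = ∅ (a set of non-leaders). Let 𝔸' be the collection of all (t+1)-element Finsets A' of Fin K such that A' ∩ U ≠ ∅, Multiset.map d A'.val = Multiset.map d A.val (the demand vectors of A' and A are equal as multisets), and A' ∖ A ⊆ U. Then Y(A) = ∑_{A' ∈ 𝔸'} Y(A') in V. -/
/-- The module of formal sums of shares over `ZMod 2`; a share is indexed by a pair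
`(n, X)` with `n : Fin N` a file index and `X : Finset (Fin K)` a set of users. -/
abbrev ShareSpace (K N : ℕ) : Type := (Fin N × Finset (Fin K)) →₀ ZMod 2

/-- The standard basis vector corresponding to the share `S_n^X`. -/
noncomputable def share (K N : ℕ) (n : Fin N) (X : Finset (Fin K)) : ShareSpace K N :=
  Finsupp.single (n, X) (1 : ZMod 2)

/-- The keyless transmission associated to a `(t+1)`-element set of users `A`:
`Y(A) = ∑_{x ∈ A} S_{d x}^{A \ {x}}`. -/
noncomputable def transmission (K N : ℕ) (d : Fin K → Fin N) (A : Finset (Fin K)) : ShareSpace K N :=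
  ∑ x ∈ A, share K N (d x) (A.erase x)

/-- Key counting lemma: for fixed `(n, X)` the number of `x` such that `insert x X` is a
"good" set and `d x = n` is even (in fact `0` or `2`). -/
lemma two_dvd_count_aux {K N : ℕ} (d : Fin K → Fin N) (U A : Finset (Fin K))
    (hU_inj : Set.InjOn d U) (hU_img : Finset.image d U = Finset.image d Finset.univ)
    (hAU : A ∩ U = ∅) (n : Fin N) (X : Finset (Fin K)) :
    2 ∣ (Finset.univ.filter (fun x : Fin K => x ∉ X ∧ d x = n ∧
        Multiset.map d (insert x X).val = Multiset.map d A.val ∧ (insert x X) \ A ⊆ U)).card := by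
  classical
  set V := Finset.univ.filter (fun x : Fin K => x ∉ X ∧ d x = n ∧
        Multiset.map d (insert x X).val = Multiset.map d A.val ∧ (insert x X) \ A ⊆ U) with hV
  by_cases hVe : V = ∅
  · rw [hVe]; simp
  -- extract a witness
  obtain ⟨x₀, hx₀⟩ := Finset.nonempty_iff_ne_empty.2 hVe
  rw [hV, Finset.mem_filter] at hx₀
  obtain ⟨-, hx₀X, hdx₀, hmap₀, hsub₀⟩ := hx₀
  have hins₀ : (insert x₀ X).val = x₀ ::ₘ X.val := Finset.insert_val_of_notMem hx₀X
  have hmap : (n ::ₘ Multiset.map d X.val) = Multiset.map d A.val := by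
    rw [← hmap₀, hins₀, Multiset.map_cons, hdx₀]
  have hXA : X \ A ⊆ U := by
    intro y hy
    rw [Finset.mem_sdiff] at hy
    exact hsub₀ (Finset.mem_sdiff.2 ⟨Finset.mem_insert_of_mem hy.1, hy.2⟩)
  -- the unique leader with demand n
  have hnU : n ∈ Finset.image d U := by
    rw [hU_img]
    exact Finset.mem_image.2 ⟨x₀, Finset.mem_univ _, hdx₀⟩
  obtain ⟨u, huU, hdu⟩ := Finset.mem_image.1 hnU
  have huA : u ∉ A := by
    intro h
    have : u ∈ A ∩ U := Finset.mem_inter.2 ⟨h, huU⟩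
    simp [hAU] at this
  have huniq : ∀ x ∈ U, d x = n → x = u := by
    intro x hxU hdx
    exact hU_inj hxU huU (by rw [hdx, hdu])
  -- characterize V
  have hVchar : V = Finset.univ.filter (fun x : Fin K => d x = n ∧ x ∉ X ∧ (x ∈ A ∨ x ∈ U)) := by
    ext x
    rw [hV, Finset.mem_filter, Finset.mem_filter]
    constructor
    · rintro ⟨hu, hxX, hdx, hm, hs⟩
      refine ⟨hu, hdx, hxX, ?_⟩
      by_cases hxA : x ∈ A
      · exact Or.inl hxA
      · exact Or.inr (hs (Finset.mem_sdiff.2 ⟨Finset.mem_insert_self _ _, hxA⟩))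
    · rintro ⟨hu, hdx, hxX, hor⟩
      refine ⟨hu, hxX, hdx, ?_, ?_⟩
      · rw [Finset.insert_val_of_notMem hxX, Multiset.map_cons, hdx, hmap]
      · intro y hy
        rw [Finset.mem_sdiff, Finset.mem_insert] at hy
        rcases hy with ⟨hy1 | hy2, hyA⟩
        · subst hy1
          rcases hor with h | h
          · exact absurd h hyA
          · exact h
        · exact hXA (Finset.mem_sdiff.2 ⟨hy2, hyA⟩)
  -- split into A-part and U-part
  have hsplit : V = (A.filter (fun x => d x = n ∧ x ∉ X)) ∪ (U.filter (fun x => d x = n ∧ x ∉ X)) := by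
    rw [hVchar]; ext x
    simp only [Finset.mem_filter, Finset.mem_union, Finset.mem_univ, true_and]
    tauto
  have hdisj : Disjoint (A.filter (fun x => d x = n ∧ x ∉ X)) (U.filter (fun x => d x = n ∧ x ∉ X)) := by
    apply Finset.disjoint_filter_filter
    rw [Finset.disjoint_iff_inter_eq_empty]
    exact hAU
  have hcardV : V.card = (A.filter (fun x => d x = n ∧ x ∉ X)).card
      + (U.filter (fun x => d x = n ∧ x ∉ X)).card := by
    rw [hsplit, Finset.card_union_of_disjoint hdisj]
  -- compute the U-part
  have hVU : (U.filter (fun x => d x = n ∧ x ∉ X)) = if u ∈ X then ∅ else {u} := by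
    split_ifs with hu
    · ext x
      simp only [Finset.mem_filter, Finset.notMem_empty, iff_false]
      rintro ⟨hxU, hdx, hxX⟩
      exact hxX (by rw [huniq x hxU hdx]; exact hu)
    · ext x
      simp only [Finset.mem_filter, Finset.mem_singleton]
      constructor
      · rintro ⟨hxU, hdx, -⟩; exact huniq x hxU hdx
      · rintro rfl; exact ⟨huU, hdu, hu⟩
  -- compute the A-part via multiset counts
  have hc1 : (A.filter (fun x => d x = n)).card = Multiset.count n (Multiset.map d A.val) := by
    rw [Multiset.count_map]
    rw [← Finset.filter_val]
    congr 1
    apply Finset.filter_congr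
    intro x _
    simp [eq_comm]
  have hcX : (X.filter (fun x => d x = n)).card = Multiset.count n (Multiset.map d X.val) := by
    rw [Multiset.count_map]
    rw [← Finset.filter_val]
    congr 1
    apply Finset.filter_congr
    intro x _
    simp [eq_comm]
  have hcnt : Multiset.count n (Multiset.map d A.val) = Multiset.count n (Multiset.map d X.val) + 1 := by
    rw [← hmap, Multiset.count_cons_self]
  -- split counts
  have hsplitA : (A.filter (fun x => d x = n)).card
      = (A.filter (fun x => d x = n ∧ x ∉ X)).card + (A.filter (fun x => d x = n ∧ x ∈ X)).card := by
    rw [← Finset.card_union_of_disjoint]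
    · congr 1
      ext x
      simp only [Finset.mem_filter, Finset.mem_union]
      tauto
    · rw [Finset.disjoint_filter]
      rintro x - ⟨-, hx⟩ ⟨-, hx'⟩
      exact hx hx'
  have hsplitX : (X.filter (fun x => d x = n)).card
      = (X.filter (fun x => d x = n ∧ x ∈ A)).card + (X.filter (fun x => d x = n ∧ x ∉ A)).card := by
    rw [← Finset.card_union_of_disjoint]
    · congr 1
      ext x
      simp only [Finset.mem_filter, Finset.mem_union]
      tauto
    · rw [Finset.disjoint_filter]
      rintro x - ⟨-, hx⟩ ⟨-, hx'⟩
      exact hx' hx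
  have hswap : (A.filter (fun x => d x = n ∧ x ∈ X)).card = (X.filter (fun x => d x = n ∧ x ∈ A)).card := by
    congr 1
    ext x
    simp only [Finset.mem_filter]
    tauto
  have hXU : (X.filter (fun x => d x = n ∧ x ∉ A)) = if u ∈ X then {u} else ∅ := by
    split_ifs with hu
    · ext x
      simp only [Finset.mem_filter, Finset.mem_singleton]
      constructor
      · rintro ⟨hxX, hdx, hxA⟩
        exact huniq x (hXA (Finset.mem_sdiff.2 ⟨hxX, hxA⟩)) hdx
      · rintro rfl; exact ⟨hu, hdu, huA⟩
    · ext x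
      simp only [Finset.mem_filter, Finset.notMem_empty, iff_false]
      rintro ⟨hxX, hdx, hxA⟩
      exact hu (by rw [← huniq x (hXA (Finset.mem_sdiff.2 ⟨hxX, hxA⟩)) hdx]; exact hxX)
  -- put everything together
  rw [hcardV, hVU]
  by_cases hu : u ∈ X
  · rw [if_pos hu]
    rw [hXU, if_pos hu] at hsplitX
    simp only [Finset.card_singleton, Finset.card_empty] at hsplitX ⊢
    omega
  · rw [if_neg hu]
    rw [hXU, if_neg hu] at hsplitX
    simp only [Finset.card_singleton, Finset.card_empty] at hsplitX ⊢
    omega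

/-- For a `(t+1)`-element set of non-leaders `A`, the transmission `Y(A)` equals the sum
of the transmissions `Y(A')` over all `(t+1)`-element sets `A'` meeting the leader set `U`,
having the same demand vector as `A`, and with `A' \ A ⊆ U` (Lemma 1). -/
theorem nonleader_transmission_redundant
    (K N t : ℕ) (ht : 1 ≤ t) (htK : t + 1 ≤ K) (d : Fin K → Fin N)
    (U : Finset (Fin K))
    (hU_inj : Set.InjOn d U)
    (hU_img : Finset.image d U = Finset.image d Finset.univ)
    (A : Finset (Fin K)) (hA : A.card = t + 1) (hAU : A ∩ U = ∅) :
    transmission K N d A =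
      ∑ A' ∈ Finset.univ.filter (fun A' : Finset (Fin K) =>
          A'.card = t + 1 ∧ A' ∩ U ≠ ∅ ∧
          Multiset.map d A'.val = Multiset.map d A.val ∧ A' \ A ⊆ U),
        transmission K N d A' := by
  classical
  set F := Finset.univ.filter (fun A' : Finset (Fin K) =>
          A'.card = t + 1 ∧ A' ∩ U ≠ ∅ ∧
          Multiset.map d A'.val = Multiset.map d A.val ∧ A' \ A ⊆ U) with hF
  set G := Finset.univ.filter (fun A' : Finset (Fin K) =>
          Multiset.map d A'.val = Multiset.map d A.val ∧ A' \ A ⊆ U) with hG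
  -- any member of G has cardinality t+1
  have hcard : ∀ A' ∈ G, A'.card = t + 1 := by
    intro A' hA'
    rw [hG, Finset.mem_filter] at hA'
    have := congrArg Multiset.card hA'.2.1
    simpa [hA] using this
  have hAnotF : A ∉ F := by
    rw [hF, Finset.mem_filter]
    rintro ⟨-, -, h, -, -⟩
    exact h hAU
  have hGF : G = insert A F := by
    ext A'
    rw [hG, hF, Finset.mem_filter, Finset.mem_insert, Finset.mem_filter]
    constructor
    · rintro ⟨hu, hm, hs⟩
      by_cases hAA : A' = A
      · exact Or.inl hAA
      · refine Or.inr ⟨hu, ?_, ?_, hm, hs⟩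
        · have := congrArg Multiset.card hm
          simpa [hA] using this
        · intro hcontra
          apply hAA
          have hsub : A' ⊆ A := by
            intro y hy
            by_contra hyA
            have : y ∈ A' ∩ U := Finset.mem_inter.2 ⟨hy, hs (Finset.mem_sdiff.2 ⟨hy, hyA⟩)⟩
            simp [hcontra] at this
          apply Finset.eq_of_subset_of_card_le hsub
          have h1 : A'.card = t + 1 := by
            have := congrArg Multiset.card hm
            simpa [hA] using this
          omega
    · rintro (rfl | ⟨hu, -, -, hm, hs⟩)
      · simp
      · exact ⟨Finset.mem_univ _, hm, hs⟩
  -- the total sum over G vanishes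
  have hStot : ∑ A' ∈ G, transmission K N d A' = 0 := by
    unfold transmission share
    ext p
    obtain ⟨n, X⟩ := p
    rw [Finsupp.finset_sum_apply]
    simp only [Finsupp.finset_sum_apply, Finsupp.single_apply, Finsupp.coe_zero, Pi.zero_apply]
    rw [Finset.sum_sigma' G (fun A' => A') (fun A' x => if (d x, A'.erase x) = (n, X) then (1:ZMod 2) else 0)]
    rw [Finset.sum_boole]
    rw [ZMod.natCast_eq_zero_iff]
    -- identify the filtered sigma set with the fiber set
    have hbij : ((G.sigma fun A' => A').filter
          (fun p : Σ _ : Finset (Fin K), Fin K => (d p.2, p.1.erase p.2) = (n, X))).card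
        = (Finset.univ.filter (fun x : Fin K => x ∉ X ∧ d x = n ∧
            Multiset.map d (insert x X).val = Multiset.map d A.val ∧
            (insert x X) \ A ⊆ U)).card := by
      refine Finset.card_bij' (fun p _ => p.2) (fun x _ => ⟨insert x X, x⟩) ?_ ?_ ?_ ?_
      · rintro ⟨A', x⟩ hp
        rw [Finset.mem_filter, Finset.mem_sigma] at hp
        obtain ⟨⟨hA'G, hxA'⟩, heq⟩ := hp
        simp only [Prod.mk.injEq] at heq
        obtain ⟨hdx, hex⟩ := heq
        have hxX : x ∉ X := by rw [← hex]; exact Finset.notMem_erase _ _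
        have hins : insert x X = A' := by rw [← hex]; exact Finset.insert_erase hxA'
        rw [hG, Finset.mem_filter] at hA'G
        rw [Finset.mem_filter]
        exact ⟨Finset.mem_univ _, hxX, hdx, by rw [hins]; exact hA'G.2.1,
          by rw [hins]; exact hA'G.2.2⟩
      · intro x hx
        rw [Finset.mem_filter] at hx
        obtain ⟨-, hxX, hdx, hm, hs⟩ := hx
        rw [Finset.mem_filter, Finset.mem_sigma]
        refine ⟨⟨?_, Finset.mem_insert_self _ _⟩, ?_⟩
        · rw [hG, Finset.mem_filter]; exact ⟨Finset.mem_univ _, hm, hs⟩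
        · simp only [Prod.mk.injEq]
          exact ⟨hdx, Finset.erase_insert hxX⟩
      · rintro ⟨A', x⟩ hp
        rw [Finset.mem_filter, Finset.mem_sigma] at hp
        obtain ⟨⟨hA'G, hxA'⟩, heq⟩ := hp
        simp only [Prod.mk.injEq] at heq
        have hins : insert x X = A' := by rw [← heq.2]; exact Finset.insert_erase hxA'
        simp only [hins]
      · intro x hx; rfl
    rw [hbij]
    exact two_dvd_count_aux d U A hU_inj hU_img hAU n X
  rw [hGF, Finset.sum_insert hAnotF] at hStot
  have h2 : ∑ A' ∈ F, transmission K N d A' + ∑ A' ∈ F, transmission K N d A' = 0 := by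
    rw [← two_smul (ZMod 2)]
    have : (2 : ZMod 2) = 0 := by decide
    rw [this, zero_smul]
  calc transmission K N d A
      = transmission K N d A + (∑ A' ∈ F, transmission K N d A' + ∑ A' ∈ F, transmission K N d A') := by rw [h2, add_zero]
    _ = (transmission K N d A + ∑ A' ∈ F, transmission K N d A') + ∑ A' ∈ F, transmission K N d A' := by rw [add_assoc]
    _ = ∑ A' ∈ F, transmission K N d A' := by rw [hStot, zero_add]
end

section
/- Let K, N, t be natural numbers with 1 ≤ t and t + 1 ≤ K, let d : Fin K → Fin N, let k : Fin K be a user, n : Fin N, and X' a t-element Finset of Fin K. Then the share e(n, X') is leaked to user k if and only if all of the following conditions hold: (C1) k ∉ X', n ≠ d k, and there exists a user x₁ : Fin K with d x₁ = n; (C2) all users in X' have the same demand, i.e., for all x, y ∈ X', d x = d y; (C3) for every x ∈ X', d x ≠ n (so that X' ∪ {x₁} has demand profile (t,1)); (C4) every x ∈ X' satisfies d x = d k (i.e., X' ∪ {k} is contained in the set of users with the same demand as k). -/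
/-- The share `S_n^{X'}` is leaked to user `k`: `k ∉ X'`, `n ≠ d k`, and there is a
collection `C` of `(t+1)`-element sets whose transmissions sum to `S_n^{X'}` plus a
vector all of whose support shares have an index set containing `k`. -/
def Leaked (K N t : ℕ) (d : Fin K → Fin N) (k : Fin K) (n : Fin N)
    (X' : Finset (Fin K)) : Prop :=
  k ∉ X' ∧ n ≠ d k ∧
    ∃ C : Finset (Finset (Fin K)), (∀ A ∈ C, A.card = t + 1) ∧
      ∃ v : ShareSpace K N,
        (∑ A ∈ C, transmission K N d A) = share K N n X' + v ∧
        ∀ p ∈ v.support, k ∈ p.2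

namespace LeakageAux

open Finset

variable {K N : ℕ} (d : Fin K → Fin N)

lemma castz {s : ℕ} (h : s % 2 = 0) : (s : ZMod 2) = 0 := by
  rw [← ZMod.natCast_mod s 2, h, Nat.cast_zero]

lemma casto {s : ℕ} (h : s % 2 = 1) : (s : ZMod 2) = 1 := by
  rw [← ZMod.natCast_mod s 2, h, Nat.cast_one]

lemma addself (w : ShareSpace K N) : w + w = 0 := by
  ext p
  have h : ∀ a : ZMod 2, a + a = 0 := by decide
  simp [h (w p)]

/-- number of users in `X` demanding `m` -/
def cnt (m : Fin N) (X : Finset (Fin K)) : ℕ := (X.filter (fun y => d y = m)).card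

lemma cnt_erase_eq {A : Finset (Fin K)} {x : Fin K} {m : Fin N}
    (hx : x ∈ A) (hdx : d x = m) : cnt d m (A.erase x) = cnt d m A - 1 := by
  unfold cnt
  rw [Finset.filter_erase, Finset.card_erase_of_mem (Finset.mem_filter.mpr ⟨hx, hdx⟩)]

lemma cnt_erase_ne {A : Finset (Fin K)} {x : Fin K} {m : Fin N}
    (hdx : d x ≠ m) : cnt d m (A.erase x) = cnt d m A := by
  unfold cnt
  rw [Finset.filter_erase, Finset.erase_eq_of_notMem
    (show x ∉ A.filter (fun y => d y = m) from fun h => hdx (Finset.mem_filter.mp h).2)]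

/-- Evaluating a linear functional on a `Leaked` relation. -/
lemma master {t : ℕ} {k : Fin K} {n : Fin N} {X' : Finset (Fin K)}
    (hL : Leaked K N t d k n X') (φ : Fin N × Finset (Fin K) → ZMod 2)
    (h1 : ∀ p : Fin N × Finset (Fin K), k ∈ p.2 → φ p = 0)
    (h2 : ∀ A : Finset (Fin K), ∑ x ∈ A, φ (d x, A.erase x) = 0) :
    φ (n, X') = 0 := by
  obtain ⟨hk, hnk, C, hCcard, v, hv, hvs⟩ := hL
  set Φ := Finsupp.linearCombination (ZMod 2) φ with hΦ
  have hY : ∀ A : Finset (Fin K),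
      Φ (transmission K N d A) = ∑ x ∈ A, φ (d x, A.erase x) := by
    intro A
    rw [transmission, map_sum]
    refine Finset.sum_congr rfl fun x _ => ?_
    rw [share, hΦ, Finsupp.linearCombination_single, smul_eq_mul, one_mul]
  have hs : Φ (share K N n X') = φ (n, X') := by
    rw [share, hΦ, Finsupp.linearCombination_single, smul_eq_mul, one_mul]
  have hvz : Φ v = 0 := by
    rw [hΦ, Finsupp.linearCombination_apply, Finsupp.sum]
    exact Finset.sum_eq_zero fun p hp => by rw [h1 p (hvs p hp), smul_zero]
  have hkey := congrArg Φ hv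
  rw [map_sum, map_add, hs, hvz, add_zero] at hkey
  rw [← hkey]
  exact Finset.sum_eq_zero fun A _ => by rw [hY, h2]

lemma one_grading {t : ℕ} {k : Fin K} {n : Fin N} {X' : Finset (Fin K)}
    (hL : Leaked K N t d k n X') (P : Finset (Fin K) → ZMod 2)
    (hP : ∀ A : Finset (Fin K),
      ∑ x ∈ A.filter (fun y => d y = n), P (A.erase x) = 0) :
    P X' = 0 := by
  have hk : k ∉ X' := hL.1
  have hnk : n ≠ d k := hL.2.1
  have h := master d hL (fun p => if p.1 = n ∧ k ∉ p.2 then P p.2 else 0)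
    (fun p hp => by simp [hp]) ?_
  · simpa [hk] using h
  · intro A
    by_cases hkA : k ∈ A
    · refine Finset.sum_eq_zero fun x hx => ?_
      by_cases hxk : x = k
      · subst hxk
        exact if_neg (fun h' => hnk h'.1.symm)
      · exact if_neg (fun h' => h'.2 (Finset.mem_erase.mpr ⟨Ne.symm hxk, hkA⟩))
    · have hPA := hP A
      rw [Finset.sum_filter] at hPA
      refine Eq.trans ?_ hPA
      refine Finset.sum_congr rfl fun x _ => ?_
      have hk' : k ∉ A.erase x := fun h => hkA (Finset.mem_of_mem_erase h)
      by_cases hdx : d x = n <;> simp [hdx, hk']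

lemma two_gradings {t : ℕ} {k : Fin K} {n : Fin N} {X' : Finset (Fin K)}
    (hL : Leaked K N t d k n X') (m₀ : Fin N) (hm₀n : m₀ ≠ n) (hdk : d k ≠ m₀)
    (P Q : Finset (Fin K) → ZMod 2)
    (hPQ : ∀ A : Finset (Fin K),
      (∑ x ∈ A.filter (fun y => d y = n), P (A.erase x)) +
      (∑ x ∈ A.filter (fun y => d y = m₀), Q (A.erase x)) = 0) :
    P X' = 0 := by
  have hk : k ∉ X' := hL.1
  have hnk : n ≠ d k := hL.2.1
  have h := master d hL
    (fun p => (if p.1 = n ∧ k ∉ p.2 then P p.2 else 0) +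
      (if p.1 = m₀ ∧ k ∉ p.2 then Q p.2 else 0))
    (fun p hp => by simp [hp]) ?_
  · simpa [hk, hm₀n.symm] using h
  · intro A
    by_cases hkA : k ∈ A
    · refine Finset.sum_eq_zero fun x hx => ?_
      by_cases hxk : x = k
      · subst hxk
        simp [Ne.symm hnk, hdk]
      · have hmem : k ∈ A.erase x := Finset.mem_erase.mpr ⟨Ne.symm hxk, hkA⟩
        simp [hmem]
    · have hPA := hPQ A
      rw [Finset.sum_filter, Finset.sum_filter] at hPA
      refine Eq.trans ?_ hPA
      rw [← Finset.sum_add_distrib]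
      refine Finset.sum_congr rfl fun x _ => ?_
      have hk' : k ∉ A.erase x := fun h => hkA (Finset.mem_of_mem_erase h)
      by_cases hdx : d x = n
      · by_cases hdx' : d x = m₀
        · exact absurd (hdx.symm.trans hdx') (Ne.symm hm₀n)
        · simp [hdx, hdx', hk']
      · by_cases hdx' : d x = m₀ <;> simp [hdx, hdx', hk']

lemma F1 (n : Fin N) (A : Finset (Fin K)) :
    ∑ x ∈ A.filter (fun y => d y = n),
      (if cnt d n (A.erase x) % 2 = 1 then (1 : ZMod 2) else 0) = 0 := by
  have h1 : ∀ x ∈ A.filter (fun y => d y = n),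
      (if cnt d n (A.erase x) % 2 = 1 then (1 : ZMod 2) else 0) =
      (if (cnt d n A - 1) % 2 = 1 then (1 : ZMod 2) else 0) := by
    intro x hx
    obtain ⟨hxA, hdx⟩ := Finset.mem_filter.mp hx
    rw [cnt_erase_eq d hxA hdx]
  rw [Finset.sum_congr rfl h1, Finset.sum_const, nsmul_eq_mul]
  show (cnt d n A : ZMod 2) * _ = 0
  rcases Nat.mod_two_eq_zero_or_one (cnt d n A) with h | h
  · rw [castz h, zero_mul]
  · rw [if_neg (by omega), mul_zero]

lemma F2 {n : Fin N} {x₀ : Fin K} (hd : d x₀ = n) (A : Finset (Fin K)) :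
    ∑ x ∈ A.filter (fun y => d y = n),
      (if x₀ ∈ A.erase x ∧ cnt d n (A.erase x) % 2 = 0 then (1 : ZMod 2) else 0) = 0 := by
  by_cases hx₀A : x₀ ∈ A
  · have hx₀S : x₀ ∈ A.filter (fun y => d y = n) := Finset.mem_filter.mpr ⟨hx₀A, hd⟩
    rw [← Finset.sum_erase_add _ _ hx₀S,
      if_neg (fun h' => Finset.notMem_erase x₀ A h'.1), add_zero]
    have h1 : ∀ x ∈ (A.filter (fun y => d y = n)).erase x₀,
        (if x₀ ∈ A.erase x ∧ cnt d n (A.erase x) % 2 = 0 then (1 : ZMod 2) else 0) =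
        (if (cnt d n A - 1) % 2 = 0 then (1 : ZMod 2) else 0) := by
      intro x hx
      obtain ⟨hxne, hxS⟩ := Finset.mem_erase.mp hx
      obtain ⟨hxA, hdx⟩ := Finset.mem_filter.mp hxS
      have hmem : x₀ ∈ A.erase x := Finset.mem_erase.mpr ⟨Ne.symm hxne, hx₀A⟩
      rw [cnt_erase_eq d hxA hdx]
      simp [hmem]
    rw [Finset.sum_congr rfl h1, Finset.sum_const, Finset.card_erase_of_mem hx₀S,
      nsmul_eq_mul]
    show (((cnt d n A) - 1 : ℕ) : ZMod 2) * _ = 0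
    rcases Nat.mod_two_eq_zero_or_one (cnt d n A - 1) with h | h
    · rw [castz h, zero_mul]
    · rw [if_neg (by omega), mul_zero]
  · exact Finset.sum_eq_zero fun x _ =>
      if_neg (fun h' => hx₀A (Finset.mem_of_mem_erase h'.1))

lemma F3 {n m₀ : Fin N} (hnm : n ≠ m₀) (A : Finset (Fin K)) :
    (∑ x ∈ A.filter (fun y => d y = n),
      (if cnt d n (A.erase x) % 2 = 0 ∧ cnt d m₀ (A.erase x) % 2 = 1
        then (1 : ZMod 2) else 0)) +
    (∑ x ∈ A.filter (fun y => d y = m₀),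
      (if cnt d n (A.erase x) % 2 = 1 then (1 : ZMod 2) else 0)) = 0 := by
  have h1 : ∀ x ∈ A.filter (fun y => d y = n),
      (if cnt d n (A.erase x) % 2 = 0 ∧ cnt d m₀ (A.erase x) % 2 = 1
        then (1 : ZMod 2) else 0) =
      (if (cnt d n A - 1) % 2 = 0 ∧ cnt d m₀ A % 2 = 1 then (1 : ZMod 2) else 0) := by
    intro x hx
    obtain ⟨hxA, hdx⟩ := Finset.mem_filter.mp hx
    rw [cnt_erase_eq d hxA hdx, cnt_erase_ne d (fun h => hnm (hdx.symm.trans h))]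
  have h2 : ∀ x ∈ A.filter (fun y => d y = m₀),
      (if cnt d n (A.erase x) % 2 = 1 then (1 : ZMod 2) else 0) =
      (if cnt d n A % 2 = 1 then (1 : ZMod 2) else 0) := by
    intro x hx
    obtain ⟨hxA, hdx⟩ := Finset.mem_filter.mp hx
    rw [cnt_erase_ne d (fun h => hnm (h.symm.trans hdx))]
  rw [Finset.sum_congr rfl h1, Finset.sum_congr rfl h2, Finset.sum_const,
    Finset.sum_const, nsmul_eq_mul, nsmul_eq_mul]
  show (cnt d n A : ZMod 2) * _ + (cnt d m₀ A : ZMod 2) * _ = 0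
  rcases Nat.mod_two_eq_zero_or_one (cnt d n A) with h | h
  · rw [castz h, zero_mul, if_neg (by omega), mul_zero, add_zero]
  · rcases Nat.mod_two_eq_zero_or_one (cnt d m₀ A) with h' | h'
    · rw [castz h', zero_mul, if_neg (by omega), mul_zero, add_zero]
    · rw [casto h, casto h', if_pos ⟨by omega, h'⟩, if_pos h]
      decide

lemma F4 {n m₀ : Fin N} {x₀ : Fin K} (hd : d x₀ = m₀) (hnm : n ≠ m₀)
    (A : Finset (Fin K)) :
    (∑ x ∈ A.filter (fun y => d y = n),
      (if x₀ ∈ A.erase x ∧ cnt d n (A.erase x) % 2 = 0 ∧ cnt d m₀ (A.erase x) % 2 = 0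
        then (1 : ZMod 2) else 0)) +
    (∑ x ∈ A.filter (fun y => d y = m₀),
      (if x₀ ∈ A.erase x ∧ cnt d n (A.erase x) % 2 = 1
        then (1 : ZMod 2) else 0)) = 0 := by
  by_cases hx₀A : x₀ ∈ A
  · have h1 : ∀ x ∈ A.filter (fun y => d y = n),
        (if x₀ ∈ A.erase x ∧ cnt d n (A.erase x) % 2 = 0 ∧ cnt d m₀ (A.erase x) % 2 = 0
          then (1 : ZMod 2) else 0) =
        (if (cnt d n A - 1) % 2 = 0 ∧ cnt d m₀ A % 2 = 0 then (1 : ZMod 2) else 0) := by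
      intro x hx
      obtain ⟨hxA, hdx⟩ := Finset.mem_filter.mp hx
      have hxne : x₀ ≠ x := fun h => hnm (by rw [← hdx, ← h]; exact hd)
      have hmem : x₀ ∈ A.erase x := Finset.mem_erase.mpr ⟨hxne, hx₀A⟩
      rw [cnt_erase_eq d hxA hdx, cnt_erase_ne d (fun h => hnm (hdx.symm.trans h))]
      simp [hmem]
    have hx₀T : x₀ ∈ A.filter (fun y => d y = m₀) := Finset.mem_filter.mpr ⟨hx₀A, hd⟩
    have h2 : ∀ x ∈ (A.filter (fun y => d y = m₀)).erase x₀,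
        (if x₀ ∈ A.erase x ∧ cnt d n (A.erase x) % 2 = 1 then (1 : ZMod 2) else 0) =
        (if cnt d n A % 2 = 1 then (1 : ZMod 2) else 0) := by
      intro x hx
      obtain ⟨hxne, hxT⟩ := Finset.mem_erase.mp hx
      obtain ⟨hxA, hdx⟩ := Finset.mem_filter.mp hxT
      have hmem : x₀ ∈ A.erase x := Finset.mem_erase.mpr ⟨Ne.symm hxne, hx₀A⟩
      rw [cnt_erase_ne d (fun h => hnm (h.symm.trans hdx))]
      simp [hmem]
    have hS1 : (∑ x ∈ A.filter (fun y => d y = n),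
        (if x₀ ∈ A.erase x ∧ cnt d n (A.erase x) % 2 = 0 ∧ cnt d m₀ (A.erase x) % 2 = 0
          then (1 : ZMod 2) else 0)) =
        (cnt d n A : ZMod 2) *
          (if (cnt d n A - 1) % 2 = 0 ∧ cnt d m₀ A % 2 = 0 then (1 : ZMod 2) else 0) := by
      rw [Finset.sum_congr rfl h1, Finset.sum_const, nsmul_eq_mul]
      rfl
    have hS2 : (∑ x ∈ A.filter (fun y => d y = m₀),
        (if x₀ ∈ A.erase x ∧ cnt d n (A.erase x) % 2 = 1 then (1 : ZMod 2) else 0)) =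
        ((cnt d m₀ A - 1 : ℕ) : ZMod 2) *
          (if cnt d n A % 2 = 1 then (1 : ZMod 2) else 0) := by
      rw [← Finset.sum_erase_add _ _ hx₀T,
        if_neg (show ¬(x₀ ∈ A.erase x₀ ∧ cnt d n (A.erase x₀) % 2 = 1) from
          fun h' => Finset.notMem_erase x₀ A h'.1), add_zero,
        Finset.sum_congr rfl h2, Finset.sum_const, Finset.card_erase_of_mem hx₀T,
        nsmul_eq_mul]
      rfl
    rw [hS1, hS2]
    have htpos : 1 ≤ cnt d m₀ A := Finset.card_pos.mpr ⟨x₀, hx₀T⟩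
    rcases Nat.mod_two_eq_zero_or_one (cnt d n A) with h | h
    · rw [castz h, zero_mul, if_neg (by omega), mul_zero, add_zero]
    · rcases Nat.mod_two_eq_zero_or_one (cnt d m₀ A) with h' | h'
      · rw [casto h, casto (show (cnt d m₀ A - 1) % 2 = 1 by omega),
          if_pos ⟨by omega, h'⟩, if_pos h]
        decide
      · rw [castz (show (cnt d m₀ A - 1) % 2 = 0 by omega), zero_mul,
          if_neg (by omega), mul_zero, add_zero]
  · rw [Finset.sum_eq_zero (fun x _ => if_neg fun h' => hx₀A (Finset.mem_of_mem_erase h'.1)),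
      Finset.sum_eq_zero (fun x _ => if_neg fun h' => hx₀A (Finset.mem_of_mem_erase h'.1)),
      add_zero]

end LeakageAux

/-- Necessary and sufficient conditions for leakage of a share in the keyless scheme
(Theorem 1): `S_n^{X'}` is leaked to user `k` iff (C1) `k ∉ X'`, `n ≠ d k`, and some user
demands `n`; (C2) all users in `X'` have the same demand; (C3) no user in `X'` demands `n`;
(C4) every user in `X'` has the same demand as `k`. -/
theorem leakage_conditions
    (K N t : ℕ) (ht : 1 ≤ t) (htK : t + 1 ≤ K) (d : Fin K → Fin N)
    (k : Fin K) (n : Fin N) (X' : Finset (Fin K)) (hX' : X'.card = t) :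
    Leaked K N t d k n X' ↔
      ((k ∉ X' ∧ n ≠ d k ∧ ∃ x₁ : Fin K, d x₁ = n) ∧
       (∀ x ∈ X', ∀ y ∈ X', d x = d y) ∧
       (∀ x ∈ X', d x ≠ n) ∧
       (∀ x ∈ X', d x = d k)) := by
  open LeakageAux in
  constructor
  · -- forward direction
    intro hL
    have hk : k ∉ X' := hL.1
    have hnk : n ≠ d k := hL.2.1
    have hcnE : cnt d n X' % 2 = 0 := by
      have h : (if cnt d n X' % 2 = 1 then (1 : ZMod 2) else 0) = 0 := one_grading d hL
        (fun X => if cnt d n X % 2 = 1 then (1 : ZMod 2) else 0)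
        (fun A => F1 d n A)
      rcases Nat.mod_two_eq_zero_or_one (cnt d n X') with h2 | h2
      · exact h2
      · rw [if_pos h2] at h
        exact absurd h one_ne_zero
    have hC3 : ∀ x ∈ X', d x ≠ n := by
      intro x₀ hx₀ hdx₀
      have h : (if x₀ ∈ X' ∧ cnt d n X' % 2 = 0 then (1 : ZMod 2) else 0) = 0 :=
        one_grading d hL
        (fun X => if x₀ ∈ X ∧ cnt d n X % 2 = 0 then (1 : ZMod 2) else 0)
        (fun A => F2 d hdx₀ A)
      rw [if_pos ⟨hx₀, hcnE⟩] at h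
      exact one_ne_zero h
    have hC4 : ∀ x ∈ X', d x = d k := by
      intro x₀ hx₀
      by_contra hne
      have hm₀n : d x₀ ≠ n := hC3 x₀ hx₀
      have hdkm : d k ≠ d x₀ := fun h => hne h.symm
      have hcmE : cnt d (d x₀) X' % 2 = 0 := by
        have h : (if cnt d n X' % 2 = 0 ∧ cnt d (d x₀) X' % 2 = 1
            then (1 : ZMod 2) else 0) = 0 := two_gradings d hL (d x₀) hm₀n hdkm
          (fun X => if cnt d n X % 2 = 0 ∧ cnt d (d x₀) X % 2 = 1 then (1 : ZMod 2) else 0)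
          (fun X => if cnt d n X % 2 = 1 then (1 : ZMod 2) else 0)
          (fun A => F3 d (Ne.symm hm₀n) A)
        rcases Nat.mod_two_eq_zero_or_one (cnt d (d x₀) X') with h2 | h2
        · exact h2
        · rw [if_pos ⟨hcnE, h2⟩] at h
          exact absurd h one_ne_zero
      have h : (if x₀ ∈ X' ∧ cnt d n X' % 2 = 0 ∧ cnt d (d x₀) X' % 2 = 0
          then (1 : ZMod 2) else 0) = 0 := two_gradings d hL (d x₀) hm₀n hdkm
        (fun X => if x₀ ∈ X ∧ cnt d n X % 2 = 0 ∧ cnt d (d x₀) X % 2 = 0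
          then (1 : ZMod 2) else 0)
        (fun X => if x₀ ∈ X ∧ cnt d n X % 2 = 1 then (1 : ZMod 2) else 0)
        (fun A => F4 d rfl (Ne.symm hm₀n) A)
      rw [if_pos ⟨hx₀, hcnE, hcmE⟩] at h
      exact one_ne_zero h
    have hC1 : ∃ x₁ : Fin K, d x₁ = n := by
      by_contra h
      push_neg at h
      have h0 : (1 : ZMod 2) = 0 := one_grading d hL (fun _ => (1 : ZMod 2)) (fun A => by
        rw [Finset.filter_false_of_mem (fun x _ => h x), Finset.sum_empty])
      exact one_ne_zero h0
    exact ⟨⟨hk, hnk, hC1⟩, fun x hx y hy => (hC4 x hx).trans (hC4 y hy).symm, hC3, hC4⟩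
  · -- backward direction
    rintro ⟨⟨hk, hnk, x₁, hx₁⟩, -, hC3, hC4⟩
    refine ⟨hk, hnk, ?_⟩
    have hx₁X' : x₁ ∉ X' := fun h => hC3 x₁ h hx₁
    have hx₁k : x₁ ≠ k := fun h => hnk (by rw [← hx₁, h])
    set A : Finset (Fin K) := insert x₁ X' with hA
    have hkA : k ∉ A := by
      rw [hA, Finset.mem_insert]
      rintro (h | h)
      · exact hx₁k h.symm
      · exact hk h
    have hAcard : A.card = t + 1 := by
      rw [hA, Finset.card_insert_of_notMem hx₁X', hX']
    have hfk : ∀ x : Fin K, k ∉ A.erase x := fun x h => hkA (Finset.mem_of_mem_erase h)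
    have hfek : ∀ x : Fin K, (insert k (A.erase x)).erase k = A.erase x := fun x =>
      Finset.erase_insert (hfk x)
    have hfcard : ∀ x ∈ X', (insert k (A.erase x)).card = t + 1 := by
      intro x hx
      rw [Finset.card_insert_of_notMem (hfk x),
        Finset.card_erase_of_mem (by rw [hA]; exact Finset.mem_insert_of_mem hx), hAcard]
      omega
    have hfinj : ∀ x ∈ X', ∀ y ∈ X',
        insert k (A.erase x) = insert k (A.erase y) → x = y := by
      intro x hx y hy hxy
      have h2 : A.erase x = A.erase y := by rw [← hfek x, ← hfek y, hxy]
      by_contra hne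
      have hmem : x ∈ A.erase y := Finset.mem_erase.mpr
        ⟨hne, by rw [hA]; exact Finset.mem_insert_of_mem hx⟩
      rw [← h2] at hmem
      exact Finset.notMem_erase x A hmem
    have hAnotim : A ∉ X'.image (fun x => insert k (A.erase x)) := by
      rw [Finset.mem_image]
      rintro ⟨x, hx, hfx⟩
      exact hkA (hfx ▸ Finset.mem_insert_self k (A.erase x))
    refine ⟨insert A (X'.image (fun x => insert k (A.erase x))), ?_, ?_⟩
    · intro A' hA'
      rcases Finset.mem_insert.mp hA' with h | h
      · rw [h, hAcard]
      · obtain ⟨x, hx, rfl⟩ := Finset.mem_image.mp h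
        exact hfcard x hx
    · refine ⟨∑ x ∈ X', ∑ y ∈ A.erase x,
        share K N (d y) ((insert k (A.erase x)).erase y), ?_, ?_⟩
      · -- the transmission sum identity
        rw [Finset.sum_insert hAnotim, Finset.sum_image hfinj]
        have hYA : transmission K N d A =
            share K N n X' + ∑ x ∈ X', share K N (d k) (A.erase x) := by
          rw [transmission]
          rw [show (∑ x ∈ A, share K N (d x) (A.erase x)) =
              ∑ x ∈ insert x₁ X', share K N (d x) (A.erase x) from by rw [← hA]]
          rw [Finset.sum_insert hx₁X']
          congr 1
          · rw [hx₁, show A.erase x₁ = X' from by rw [hA]; exact Finset.erase_insert hx₁X']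
          · exact Finset.sum_congr rfl fun x hx => by rw [hC4 x hx]
        have hYf : ∀ x ∈ X', transmission K N d (insert k (A.erase x)) =
            share K N (d k) (A.erase x) +
              ∑ y ∈ A.erase x, share K N (d y) ((insert k (A.erase x)).erase y) := by
          intro x hx
          rw [transmission, Finset.sum_insert (hfk x)]
          congr 1
          rw [hfek x]
        rw [hYA, Finset.sum_congr rfl hYf, Finset.sum_add_distrib]
        rw [add_assoc, ← add_assoc (∑ x ∈ X', share K N (d k) (A.erase x))
          (∑ x ∈ X', share K N (d k) (A.erase x)) _, addself, zero_add]
      · -- support condition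
        intro p hp
        by_contra hkp
        apply Finsupp.mem_support_iff.mp hp
        rw [Finsupp.finset_sum_apply]
        refine Finset.sum_eq_zero fun x hx => ?_
        rw [Finsupp.finset_sum_apply]
        refine Finset.sum_eq_zero fun y hy => ?_
        rw [share, Finsupp.single_apply]
        refine if_neg fun h => hkp ?_
        rw [← h]
        have hyk : k ≠ y := fun h' => hkA (h' ▸ Finset.mem_of_mem_erase hy)
        exact Finset.mem_erase.mpr ⟨hyk, Finset.mem_insert_self k (A.erase x)⟩
end

section
/- Let K, N, t be natural numbers with 1 ≤ t and t + 1 ≤ K, and let d : Fin K → Fin N. Let k, x₁ : Fin K with d x₁ ≠ d k, and let X' be a t-element Finset of Fin K with k ∉ X' and such that every x ∈ X' satisfies d x = d k (so in particular x₁ ∉ X'). Set X₁ := X' ∪ {x₁}, and for each x ∈ X' set X(x) := (X₁.erase x) ∪ {k}. Then Y(X₁) + ∑_{x ∈ X'} Y(X(x)) = e(d x₁, X') + v in V, where v is nonzero and every element (m, X) of the support of v satisfies k ∈ X. In particular the share e(d x₁, X') is leaked to user k. -/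
/-- Explicit leakage construction (if-part of Theorem 1): given a user `k`, a user `x₁`
with `d x₁ ≠ d k`, and a `t`-element set `X'` of users all sharing `k`'s demand with
`k ∉ X'`, the sum of `Y(X₁)` (where `X₁ = X' ∪ {x₁}`) and the transmissions
`Y((X₁ \ {x}) ∪ {k})` for `x ∈ X'` equals `S_{d x₁}^{X'} + v` for some nonzero `v`
all of whose support shares have index sets containing `k`; in particular the share
`S_{d x₁}^{X'}` is leaked to user `k`. -/
theorem leakage_construction
    (K N t : ℕ) (ht : 1 ≤ t) (htK : t + 1 ≤ K) (d : Fin K → Fin N)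
    (k x₁ : Fin K) (hd : d x₁ ≠ d k)
    (X' : Finset (Fin K)) (hX' : X'.card = t) (hk : k ∉ X')
    (hsame : ∀ x ∈ X', d x = d k) :
    (∃ v : ShareSpace K N, v ≠ 0 ∧ (∀ p ∈ v.support, k ∈ p.2) ∧
        transmission K N d (insert x₁ X') +
          ∑ x ∈ X', transmission K N d (insert k ((insert x₁ X').erase x)) =
        share K N (d x₁) X' + v) ∧
      Leaked K N t d k (d x₁) X' := by
  classical
  have hx₁ : x₁ ∉ X' := fun h => hd (hsame x₁ h)
  have hkx₁ : k ≠ x₁ := fun h => hd (congrArg d h.symm)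
  set X₁ : Finset (Fin K) := insert x₁ X' with hX₁def
  have hkX₁ : k ∉ X₁ := by
    simp [hX₁def, Finset.mem_insert, hk, hkx₁]
  -- the "junk" vector
  set W : ShareSpace K N :=
    ∑ x ∈ X', ∑ y ∈ X₁.erase x, share K N (d y) (insert k ((X₁.erase x).erase y)) with hWdef
  have hself : ∀ v : ShareSpace K N, v + v = 0 := fun v => by
    rw [← two_smul (ZMod 2) v, show (2 : ZMod 2) = 0 by decide, zero_smul]
  -- Step 1
  have step1 : transmission K N d X₁ =
      share K N (d x₁) X' + ∑ x ∈ X', share K N (d k) (X₁.erase x) := by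
    rw [transmission, hX₁def, Finset.sum_insert hx₁, Finset.erase_insert hx₁]
    congr 1
    exact Finset.sum_congr rfl fun x hx => by rw [hsame x hx]
  -- Step 2
  have step2 : ∀ x ∈ X', transmission K N d (insert k (X₁.erase x)) =
      share K N (d k) (X₁.erase x) +
        ∑ y ∈ X₁.erase x, share K N (d y) (insert k ((X₁.erase x).erase y)) := by
    intro x hx
    have hk2 : k ∉ X₁.erase x := fun h => hkX₁ (Finset.mem_of_mem_erase h)
    rw [transmission, Finset.sum_insert hk2, Finset.erase_insert hk2]
    congr 1
    refine Finset.sum_congr rfl fun y hy => ?_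
    rw [Finset.erase_insert_of_ne (fun h : k = y => hk2 (h ▸ hy))]
  -- main identity
  have key : transmission K N d X₁ +
      ∑ x ∈ X', transmission K N d (insert k (X₁.erase x)) =
      share K N (d x₁) X' + W := by
    rw [step1, Finset.sum_congr rfl step2, Finset.sum_add_distrib, hWdef]
    have : ∀ S : ShareSpace K N,
        share K N (d x₁) X' + S + (S + W) = share K N (d x₁) X' + (S + S) + W := by
      intro S; abel
    rw [this, hself, add_zero]
  -- support of W
  have hsupp : ∀ p ∈ W.support, k ∈ p.2 := by
    intro p hp
    have h1 := Finsupp.support_finset_sum hp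
    obtain ⟨x, hx, h2⟩ := Finset.mem_biUnion.mp h1
    have h3 := Finsupp.support_finset_sum h2
    obtain ⟨y, hy, h4⟩ := Finset.mem_biUnion.mp h3
    have h5 := Finsupp.support_single_subset h4
    rw [Finset.mem_singleton] at h5
    rw [h5]
    exact Finset.mem_insert_self _ _
  -- W is nonzero
  obtain ⟨x₀, hx₀⟩ : X'.Nonempty := Finset.card_pos.mp (hX' ▸ ht)
  have herase : ∀ x ∈ X', (X₁.erase x).erase x₁ = X'.erase x := by
    intro x hx
    have hx₁x : x₁ ≠ x := fun h => hx₁ (h ▸ hx)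
    rw [hX₁def, Finset.erase_insert_of_ne hx₁x, Finset.erase_insert]
    exact fun h => hx₁ (Finset.mem_of_mem_erase h)
  have hinj : ∀ x ∈ X', ∀ x' ∈ X', insert k (X'.erase x) = insert k (X'.erase x') → x = x' := by
    intro x hx x' hx' h
    have hk1 : k ∉ X'.erase x := fun h' => hk (Finset.mem_of_mem_erase h')
    have hk2 : k ∉ X'.erase x' := fun h' => hk (Finset.mem_of_mem_erase h')
    have : X'.erase x = X'.erase x' := by
      rw [← Finset.erase_insert hk1, ← Finset.erase_insert hk2, h]
    by_contra hne
    have : x' ∈ X'.erase x' := this ▸ Finset.mem_erase.mpr ⟨Ne.symm hne, hx'⟩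
    exact (Finset.mem_erase.mp this).1 rfl
  have hWne : W ≠ 0 := by
    intro h0
    have hWapp : W (d x₁, insert k (X'.erase x₀)) = 1 := by
      rw [hWdef, Finsupp.finset_sum_apply]
      rw [Finset.sum_eq_single_of_mem x₀ hx₀]
      · rw [Finsupp.finset_sum_apply]
        have hx₁mem : x₁ ∈ X₁.erase x₀ :=
          Finset.mem_erase.mpr ⟨fun h => hx₁ (h ▸ hx₀), Finset.mem_insert_self _ _⟩
        rw [Finset.sum_eq_single_of_mem x₁ hx₁mem]
        · rw [herase x₀ hx₀, share, Finsupp.single_apply, if_pos rfl]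
        · intro y hy hyne
          have hyX' : y ∈ X' := by
            have := Finset.mem_of_mem_erase hy
            rw [hX₁def, Finset.mem_insert] at this
            exact this.resolve_left hyne
          rw [share, Finsupp.single_apply, if_neg]
          intro h
          exact hd (by rw [← (Prod.mk.injEq _ _ _ _).mp h |>.1, hsame y hyX'])
      · intro x hx hxne
        rw [Finsupp.finset_sum_apply]
        refine Finset.sum_eq_zero fun y hy => ?_
        rw [share, Finsupp.single_apply, if_neg]
        intro h
        obtain ⟨h1, h2⟩ := (Prod.mk.injEq _ _ _ _).mp h
        by_cases hyx : y = x₁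
        · subst hyx
          rw [herase x hx] at h2
          exact hxne (hinj x hx x₀ hx₀ h2)
        · have hyX' : y ∈ X' := by
            have := Finset.mem_of_mem_erase hy
            rw [hX₁def, Finset.mem_insert] at this
            exact this.resolve_left hyx
          exact hd (by rw [← h1, hsame y hyX'])
    rw [h0] at hWapp
    simp at hWapp
  refine ⟨⟨W, hWne, hsupp, key⟩, hk, hd, ?_⟩
  -- the Leaked statement
  refine ⟨insert X₁ (X'.image fun x => insert k (X₁.erase x)), ?_, W, ?_, hsupp⟩
  · intro A hA
    rw [Finset.mem_insert] at hA
    rcases hA with rfl | hA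
    · rw [hX₁def, Finset.card_insert_of_notMem hx₁, hX']
    · obtain ⟨x, hx, rfl⟩ := Finset.mem_image.mp hA
      have hk2 : k ∉ X₁.erase x := fun h => hkX₁ (Finset.mem_of_mem_erase h)
      rw [Finset.card_insert_of_notMem hk2,
        Finset.card_erase_of_mem (Finset.mem_insert_of_mem hx),
        Finset.card_insert_of_notMem hx₁, hX']
      omega
  · have hnotmem : X₁ ∉ X'.image fun x => insert k (X₁.erase x) := by
      intro h
      obtain ⟨x, hx, hEq⟩ := Finset.mem_image.mp h
      exact hkX₁ (hEq ▸ Finset.mem_insert_self k _)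
    rw [Finset.sum_insert hnotmem, Finset.sum_image, key]
    intro x hx x' hx' h
    have : X₁.erase x = X₁.erase x' := by
      have hk1 : k ∉ X₁.erase x := fun h' => hkX₁ (Finset.mem_of_mem_erase h')
      have hk2 : k ∉ X₁.erase x' := fun h' => hkX₁ (Finset.mem_of_mem_erase h')
      rw [← Finset.erase_insert hk1, ← Finset.erase_insert hk2,
        show insert k (X₁.erase x) = insert k (X₁.erase x') from h]
    by_contra hne
    have hx'mem : x' ∈ X₁.erase x' :=
      this ▸ Finset.mem_erase.mpr ⟨Ne.symm hne, Finset.mem_insert_of_mem hx'⟩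
    exact (Finset.mem_erase.mp hx'mem).1 rfl
end

section
/- Let K, N, t be natural numbers with 1 ≤ t and t + 1 ≤ K, let d : Fin K → Fin N, and let k : Fin K be a user. Let E_k := Finset.univ.filter (fun j => d j = d k) and N_e(d) := (Finset.image d Finset.univ).card. Then the set of pairs (n, X'), with n : Fin N and X' a t-element Finset of Fin K, such that the share e(n, X') is leaked to user k has cardinality exactly Nat.choose (E_k.card − 1) t * (N_e(d) − 1). -/
section aux

variable {K N t : ℕ} {d : Fin K → Fin N} {k : Fin K}

/-- char 2 -/
lemma shareSpace_add_self (w : ShareSpace K N) : w + w = 0 := by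
  rw [← two_smul (ZMod 2) w]
  have : (2 : ZMod 2) = 0 := by decide
  rw [this, zero_smul]

/-- Backward direction: construction of a leaking collection. -/
lemma leaked_of (ht : 1 ≤ t) (n : Fin N) (X' : Finset (Fin K)) (m : Fin K)
    (hdm : d m = n) (hX'E : ∀ x ∈ X', d x = d k) (hkX' : k ∉ X') (hn : n ≠ d k)
    (hcard : X'.card = t) : Leaked K N t d k n X' := by
  classical
  have hmX' : m ∉ X' := fun h => hn (by rw [← hdm, hX'E m h])
  have hmk : m ≠ k := fun h => hn (by rw [← hdm, h])
  set B₀ : Finset (Fin K) := insert m X' with hB₀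
  set g : Fin K → Finset (Fin K) := fun x => insert k (insert m (X'.erase x)) with hg
  have hkg : ∀ x, k ∉ insert m (X'.erase x) := by
    intro x hx
    rcases Finset.mem_insert.1 hx with h | h
    · exact hmk h.symm
    · exact hkX' (Finset.mem_of_mem_erase h)
  have hmg : ∀ x, m ∉ X'.erase x := fun x hx => hmX' (Finset.mem_of_mem_erase hx)
  have hkB₀ : k ∉ B₀ := by
    intro hx
    rcases Finset.mem_insert.1 hx with h | h
    · exact hmk h.symm
    · exact hkX' h
  refine ⟨hkX', hn, insert B₀ (X'.image g), ?_, ?_⟩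
  · intro A hA
    rcases Finset.mem_insert.1 hA with rfl | hA
    · rw [Finset.card_insert_of_notMem hmX', hcard]
    · obtain ⟨x, hx, rfl⟩ := Finset.mem_image.1 hA
      rw [Finset.card_insert_of_notMem (hkg x), Finset.card_insert_of_notMem (hmg x),
        Finset.card_erase_of_mem hx, hcard]
      omega
  · set v : ShareSpace K N := ∑ x ∈ X', (share K N n (insert k (X'.erase x)) +
      ∑ y ∈ X'.erase x, share K N (d k) (insert k (insert m ((X'.erase x).erase y)))) with hv
    refine ⟨v, ?_, ?_⟩
    · -- the sum equation
      have hB₀ni : B₀ ∉ X'.image g := by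
        intro h
        obtain ⟨x, hx, hgx⟩ := Finset.mem_image.1 h
        exact hkB₀ (hgx ▸ Finset.mem_insert_self k _)
      have hginj : ∀ x ∈ X', ∀ y ∈ X', g x = g y → x = y := by
        intro x hx y hy hxy
        have h1 : insert m (X'.erase x) = insert m (X'.erase y) := by
          have := congrArg (fun s => Finset.erase s k) hxy
          simpa [hg, Finset.erase_insert (hkg x), Finset.erase_insert (hkg y)] using this
        have h2 : X'.erase x = X'.erase y := by
          have := congrArg (fun s => Finset.erase s m) h1
          simpa [Finset.erase_insert (hmg x), Finset.erase_insert (hmg y)] using this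
        exact (Finset.erase_inj X' hx).1 h2
      rw [Finset.sum_insert hB₀ni, Finset.sum_image hginj]
      set s1 : ShareSpace K N := ∑ x ∈ X', share K N (d k) (insert m (X'.erase x)) with hs1
      have hYB₀ : transmission K N d B₀ = share K N n X' + s1 := by
        rw [transmission, hB₀, Finset.sum_insert hmX', Finset.erase_insert hmX', hdm]
        congr 1
        apply Finset.sum_congr rfl
        intro x hx
        rw [hX'E x hx, Finset.erase_insert_of_ne (fun h : m = x => hmX' (h ▸ hx))]
      have hYg : ∀ x ∈ X', transmission K N d (g x) =
          share K N (d k) (insert m (X'.erase x)) +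
          (share K N n (insert k (X'.erase x)) +
            ∑ y ∈ X'.erase x, share K N (d k) (insert k (insert m ((X'.erase x).erase y)))) := by
        intro x hx
        rw [transmission, hg]
        rw [Finset.sum_insert (hkg x), Finset.sum_insert (hmg x)]
        rw [Finset.erase_insert (hkg x)]
        have e1 : (insert k (insert m (X'.erase x))).erase m = insert k (X'.erase x) := by
          rw [Finset.erase_insert_of_ne hmk.symm, Finset.erase_insert (hmg x)]
        rw [e1, hdm]
        simp only []
        congr 2
        apply Finset.sum_congr rfl
        intro y hy
        have hyX' : y ∈ X' := Finset.mem_of_mem_erase hy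
        have hyk : k ≠ y := fun h => hkX' (h ▸ hyX')
        have hym : m ≠ y := fun h => hmX' (h ▸ hyX')
        rw [hX'E y hyX', Finset.erase_insert_of_ne hyk, Finset.erase_insert_of_ne hym]
      rw [hYB₀, Finset.sum_congr rfl hYg, Finset.sum_add_distrib, ← hs1, ← hv]
      have : share K N n X' + s1 + (s1 + v) = share K N n X' + ((s1 + s1) + v) := by abel
      rw [this, shareSpace_add_self, zero_add]
    · -- support condition
      intro p hp
      have hsub := Finsupp.support_finset_sum hp
      obtain ⟨x, hx, hpx⟩ := Finset.mem_biUnion.1 hsub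
      rcases Finset.mem_union.1 (Finsupp.support_add hpx) with h | h
      · have := Finsupp.support_single_subset h
        simp only [Finset.mem_singleton] at this
        rw [this]
        exact Finset.mem_insert_self k _
      · have hsub2 := Finsupp.support_finset_sum h
        obtain ⟨y, hy, hpy⟩ := Finset.mem_biUnion.1 hsub2
        have := Finsupp.support_single_subset hpy
        simp only [Finset.mem_singleton] at this
        rw [this]
        exact Finset.mem_insert_self k _

end aux

section fwd2

variable {K N t : ℕ} {d : Fin K → Fin N} {k : Fin K}



lemma mem_image_of_leaked {n : Fin N} {X' : Finset (Fin K)}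
    (h : Leaked K N t d k n X') : n ∈ Finset.image d Finset.univ := by
  classical
  obtain ⟨hkX', hn, C, hC, v, heq, hv⟩ := h
  by_contra hni
  have hdx : ∀ x : Fin K, d x ≠ n := by
    intro x hx
    exact hni (Finset.mem_image.2 ⟨x, Finset.mem_univ x, hx⟩)
  have happ := congrFun (congrArg (fun w : ShareSpace K N => (w : _ → ZMod 2)) heq) (n, X')
  simp only [Finsupp.coe_add, Pi.add_apply] at happ
  have hL : (∑ A ∈ C, transmission K N d A) (n, X') = 0 := by
    rw [Finsupp.finset_sum_apply]
    apply Finset.sum_eq_zero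
    intro A hA
    rw [transmission, Finsupp.finset_sum_apply]
    apply Finset.sum_eq_zero
    intro x hx
    rw [share]
    exact Finsupp.single_eq_of_ne' (by simp [Ne, Prod.ext_iff]; intro h; exact absurd h (hdx x))
  have hvz : v (n, X') = 0 := by
    by_contra hvz
    exact hkX' (hv (n, X') (Finsupp.mem_support_iff.2 hvz))
  rw [hL, hvz, share, Finsupp.single_eq_same, add_zero] at happ
  exact one_ne_zero happ.symm

lemma demand_eq_of_leaked {n : Fin N} {X' : Finset (Fin K)}
    (h : Leaked K N t d k n X') {x₀ : Fin K} (hx₀ : x₀ ∈ X') : d x₀ = d k := by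
  classical
  obtain ⟨hkX', hn, C, hC, v, heq, hv⟩ := h
  by_contra hc
  set M₀ : Multiset (Fin N) := n ::ₘ X'.val.map d with hM₀
  have key : ∃ q : Fin N, ∃ w ∈ X', d w = q ∧ q ≠ d k ∧
      ∀ x ∈ X', (d x = n ∨ d x = q ↔ d x = q) := by
    by_cases hqc : ∃ x ∈ X', d x = n
    · obtain ⟨x₁, hx₁, hdx₁⟩ := hqc
      exact ⟨n, x₁, hx₁, hdx₁, hn, fun x hx => by tauto⟩
    · push_neg at hqc
      exact ⟨d x₀, x₀, hx₀, rfl, hc, fun x hx =>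
        ⟨fun h => h.resolve_left (hqc x hx), Or.inr⟩⟩
  obtain ⟨q, w, hwX', hwq, hqk, hqT⟩ := key
  set T : Finset (Fin N) := insert n {q} with hT
  have hnT : n ∈ T := Finset.mem_insert_self n _
  have hdkT : d k ∉ T := by
    intro hm
    rcases Finset.mem_insert.1 hm with h | h
    · exact hn h.symm
    · exact hqk ((Finset.mem_singleton.1 h).symm)
  set a : ℕ := (X'.filter (fun x => d x = q)).card with ha
  set P : Finset (Fin K) := if (a + 1) % 2 = 0 then (∅ : Finset (Fin K)) else {w} with hP
  have hPX' : P ⊆ X' := by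
    rw [hP]; split
    · exact Finset.empty_subset _
    · exact Finset.singleton_subset_iff.2 hwX'
  have hPq : ∀ x ∈ P, d x = q := by
    intro x hx
    rw [hP] at hx; revert hx; split
    · intro hx; exact absurd hx (Finset.notMem_empty x)
    · intro hx; rw [Finset.mem_singleton.1 hx]; exact hwq
  have hPcard : P.card % 2 = (a + 1) % 2 := by
    rw [hP]; split
    · next h => simp [h]
    · next h => rw [Finset.card_singleton]; omega
  set f : (Fin N × Finset (Fin K)) → ZMod 2 := fun p =>
    if k ∉ p.2 ∧ p.1 ∈ T ∧ P ⊆ p.2 ∧ (p.1 ::ₘ p.2.val.map d) = M₀ then 1 else 0 with hf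
  have hfk : ∀ p : Fin N × Finset (Fin K), k ∈ p.2 → f p = 0 := by
    intro p hp
    rw [hf]; exact if_neg (fun hcond => hcond.1 hp)
  have hf0 : f (n, X') = 1 := by
    rw [hf]
    exact if_pos ⟨hkX', hnT, hPX', rfl⟩
  have F3 : ∀ A : Finset (Fin K), ∑ x ∈ A, f (d x, A.erase x) = 0 := by
    intro A
    have hmult : ∀ x ∈ A, d x ::ₘ (A.erase x).val.map d = A.val.map d := by
      intro x hx
      rw [Finset.erase_val, ← Multiset.map_cons, Multiset.cons_erase (Finset.mem_def.1 hx)]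
    by_cases hkA : k ∈ A
    · apply Finset.sum_eq_zero
      intro x hx
      by_cases hxk : x = k
      · subst hxk
        rw [hf]
        exact if_neg (fun hcond => hdkT hcond.2.1)
      · rw [hf]
        exact if_neg (fun hcond => hcond.1 (Finset.mem_erase.2 ⟨Ne.symm hxk, hkA⟩))
    · by_cases hμ : A.val.map d = M₀
      · have hterm : ∀ x ∈ A, f (d x, A.erase x) =
            if d x ∈ T ∧ P ⊆ A ∧ x ∉ P then 1 else 0 := by
          intro x hx
          have hm : d x ::ₘ (A.erase x).val.map d = M₀ := by rw [hmult x hx, hμ]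
          have hknot : k ∉ A.erase x := fun h => hkA (Finset.mem_of_mem_erase h)
          rw [hf]
          refine if_congr ?_ rfl rfl
          rw [Finset.subset_erase]
          constructor
          · rintro ⟨-, h1, ⟨h2, h3⟩, -⟩; exact ⟨h1, h2, h3⟩
          · rintro ⟨h1, h2, h3⟩; exact ⟨hknot, h1, ⟨h2, h3⟩, hm⟩
        rw [Finset.sum_congr rfl hterm]
        by_cases hPA : P ⊆ A
        · have hterm2 : ∀ x ∈ A, (if d x ∈ T ∧ P ⊆ A ∧ x ∉ P then (1 : ZMod 2) else 0) =
              if d x ∈ T ∧ x ∉ P then 1 else 0 := by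
            intro x _
            exact if_congr (by tauto) rfl rfl
          rw [Finset.sum_congr rfl hterm2, Finset.sum_boole]
          have hfilt : A.filter (fun x => d x ∈ T ∧ x ∉ P) =
              (A.filter (fun x => d x ∈ T)) \ P := by
            ext y
            simp only [Finset.mem_filter, Finset.mem_sdiff]
            tauto
          have hPsub : P ⊆ A.filter (fun x => d x ∈ T) := by
            intro y hy
            refine Finset.mem_filter.2 ⟨hPA hy, ?_⟩
            rw [hPq y hy]
            exact Finset.mem_insert.2 (Or.inr (Finset.mem_singleton_self q))
          rw [hfilt, Finset.card_sdiff_of_subset hPsub]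
          have hc1 : (A.filter (fun x => d x ∈ T)).card = a + 1 := by
            have e1 : (A.filter (fun x => d x ∈ T)).card =
                Multiset.countP (· ∈ T) (A.val.map d) := by
              rw [Multiset.countP_map]
              rfl
            rw [e1, hμ, hM₀, Multiset.countP_cons_of_pos _ hnT, Multiset.countP_map]
            have e2 : X'.val.filter (fun x => d x ∈ T) = X'.val.filter (fun x => d x = q) := by
              apply Multiset.filter_congr
              intro x hx
              have := hqT x (Finset.mem_def.2 hx)
              rw [hT]
              simp only [Finset.mem_insert, Finset.mem_singleton]
              exact this
            rw [e2, ha]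
            rfl
          rw [hc1]
          have hle : P.card ≤ a + 1 := by
            rw [hP]; split
            · simp
            · simp
          rw [Nat.cast_sub hle, sub_eq_zero]
          exact (ZMod.natCast_eq_natCast_iff _ _ _).2 (hPcard.symm)
        · apply Finset.sum_eq_zero
          intro x _
          exact if_neg (fun hcond => hPA hcond.2.1)
      · apply Finset.sum_eq_zero
        intro x hx
        rw [hf]
        refine if_neg (fun hcond => hμ ?_)
        rw [← hmult x hx, hcond.2.2.2]
  -- apply the functional to the equation
  set φ := Finsupp.linearCombination (ZMod 2) f with hφ
  have hshare : ∀ (m : Fin N) (X : Finset (Fin K)), φ (share K N m X) = f (m, X) := by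
    intro m X
    rw [hφ, share, Finsupp.linearCombination_single, one_smul]
  have h0 := congrArg φ heq
  rw [map_sum, map_add] at h0
  have hL : ∑ A ∈ C, φ (transmission K N d A) = 0 := by
    apply Finset.sum_eq_zero
    intro A _
    rw [transmission, map_sum]
    rw [Finset.sum_congr rfl (fun x _ => hshare (d x) (A.erase x))]
    exact F3 A
  have hvz : φ v = 0 := by
    rw [hφ, Finsupp.linearCombination_apply, Finsupp.sum]
    apply Finset.sum_eq_zero
    intro p hp
    rw [hfk p (hv p hp), smul_zero]
  rw [hL, hshare n X', hf0, hvz, add_zero] at h0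
  exact one_ne_zero h0.symm

end fwd2

/-- The exact number of leaked shares (Lemma 3): the set of shares `(n, X')` (with
`X'` of size `t`) leaked to user `k` in the keyless scheme has cardinality
`C(|E_k| - 1, t) * (N_e(d) - 1)`, where `E_k` is the set of users demanding `d k`
and `N_e(d)` is the number of distinct demands. -/

theorem number_of_leaked_shares
    (K N t : ℕ) (ht : 1 ≤ t) (htK : t + 1 ≤ K) (d : Fin K → Fin N) (k : Fin K) :
    {p : Fin N × Finset (Fin K) |
        p.2.card = t ∧ Leaked K N t d k p.1 p.2}.ncard =
      Nat.choose ((Finset.univ.filter (fun j => d j = d k)).card - 1) t *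
        ((Finset.image d Finset.univ).card - 1) := by
  classical
  set E : Finset (Fin K) := Finset.univ.filter (fun j => d j = d k) with hE
  set F : Finset (Fin N × Finset (Fin K)) :=
    ((Finset.image d Finset.univ).erase (d k)) ×ˢ Finset.powersetCard t (E.erase k) with hF
  have hset : {p : Fin N × Finset (Fin K) |
      p.2.card = t ∧ Leaked K N t d k p.1 p.2} = ↑F := by
    ext ⟨n, X'⟩
    simp only [Set.mem_setOf_eq, Finset.mem_coe, hF, Finset.mem_product,
      Finset.mem_erase, Finset.mem_powersetCard]
    constructor
    · rintro ⟨hcard, hL⟩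
      refine ⟨⟨hL.2.1.symm ∘ Eq.symm ∘ Eq.symm ∘ Eq.symm, mem_image_of_leaked hL⟩, ⟨?_, hcard⟩⟩
      · intro x hx
        refine Finset.mem_erase.2 ⟨fun h => hL.1 (h ▸ hx), ?_⟩
        rw [hE]
        exact Finset.mem_filter.2 ⟨Finset.mem_univ x, demand_eq_of_leaked hL hx⟩
    · rintro ⟨⟨hnk, hnim⟩, hsub, hcard⟩
      obtain ⟨m, _, hdm⟩ := Finset.mem_image.1 hnim
      have hX'E : ∀ x ∈ X', d x = d k := by
        intro x hx
        have := Finset.mem_erase.1 (hsub hx)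
        rw [hE] at this
        exact (Finset.mem_filter.1 this.2).2
      have hkX' : k ∉ X' := fun h => (Finset.mem_erase.1 (hsub h)).1 rfl
      exact ⟨hcard, leaked_of ht n X' m hdm hX'E hkX' hnk hcard⟩
  rw [hset, Set.ncard_coe_finset, hF, Finset.card_product, Finset.card_powersetCard,
    Finset.card_erase_of_mem (Finset.mem_image_of_mem d (Finset.mem_univ k)),
    Finset.card_erase_of_mem (by rw [hE]; exact Finset.mem_filter.2 ⟨Finset.mem_univ k, rfl⟩),
    mul_comm]
end

section
/- Let K, N, t be natural numbers with 2 ≤ t and t + 1 ≤ K, let d : Fin K → Fin N, and let U be a leader set for d. Let V' := Finset.univ ∖ U (the non-leaders), and for each demand value m ∈ Finset.image d V' let E'_m := V'.filter (fun x => d x = m). Then the number of (t+1)-element subsets A of V' that have demand profile (t,1) equals ∑_{m ∈ Finset.image d V'} Nat.choose (E'_m.card) t * (V'.card − E'_m.card). -/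
/-- A `(t+1)`-element set of users `A` has demand profile `(t, 1)`: there is `a ∈ A`
such that all users in `A \ {a}` have equal demands and `a`'s demand differs from
that common demand. -/
def ProfileT1 (K N : ℕ) (d : Fin K → Fin N) (A : Finset (Fin K)) : Prop :=
  ∃ a ∈ A, (∀ x ∈ A.erase a, ∀ y ∈ A.erase a, d x = d y) ∧
    (∀ x ∈ A.erase a, d a ≠ d x)

instance (K N : ℕ) (d : Fin K → Fin N) : DecidablePred (ProfileT1 K N d) :=
  fun A => by unfold ProfileT1; infer_instance

/-- Counting saved transmissions for `t ≥ 2` (Lemma 4, first case): the number of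
`(t+1)`-element subsets of the non-leaders `V'` with demand profile `(t,1)` equals
`∑_m C(|E'_m|, t) * (|V'| - |E'_m|)`, the sum running over demand values `m` of
non-leaders, where `E'_m` is the class of non-leaders demanding `m`. -/
theorem count_profile_t1_nonleader_sets
    (K N t : ℕ) (ht : 2 ≤ t) (htK : t + 1 ≤ K) (d : Fin K → Fin N)
    (U : Finset (Fin K))
    (hU_inj : Set.InjOn d U)
    (hU_img : Finset.image d U = Finset.image d Finset.univ) :
    (((Finset.univ \ U).powersetCard (t + 1)).filter
        (fun A => ProfileT1 K N d A)).card =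
      ∑ m ∈ Finset.image d (Finset.univ \ U),
        Nat.choose ((Finset.univ \ U).filter (fun x => d x = m)).card t *
          ((Finset.univ \ U).card -
            ((Finset.univ \ U).filter (fun x => d x = m)).card) := by
  classical
  set V' : Finset (Fin K) := Finset.univ \ U with hV'
  set E : Fin N → Finset (Fin K) := fun m => V'.filter (fun x => d x = m) with hE
  have hcard : ((Finset.image d V').sigma
      (fun m => ((E m).powersetCard t) ×ˢ (V' \ E m))).card =
      ∑ m ∈ Finset.image d V',
        Nat.choose ((E m).card) t * (V'.card - (E m).card) := by
    rw [Finset.card_sigma]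
    refine Finset.sum_congr rfl fun m _ => ?_
    rw [Finset.card_product, Finset.card_powersetCard,
      Finset.card_sdiff_of_subset (Finset.filter_subset _ _)]
  rw [← hcard]
  refine (Finset.card_bij (fun p _ => insert p.2.2 p.2.1) ?_ ?_ ?_).symm
  · rintro ⟨m, B, a⟩ hp
    simp only [Finset.mem_sigma, Finset.mem_product, Finset.mem_powersetCard,
      Finset.mem_sdiff] at hp
    obtain ⟨hm, ⟨hBE, hBcard⟩, haV, haE⟩ := hp
    have hda : d a ≠ m := fun h => haE (Finset.mem_filter.mpr ⟨haV, h⟩)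
    have hBm : ∀ x ∈ B, d x = m := fun x hx => (Finset.mem_filter.mp (hBE hx)).2
    have haB : a ∉ B := fun h => hda (hBm a h)
    have herase : (insert a B).erase a = B := Finset.erase_insert haB
    refine Finset.mem_filter.mpr ⟨Finset.mem_powersetCard.mpr ⟨?_, ?_⟩, ?_⟩
    · intro x hx
      rcases Finset.mem_insert.mp hx with rfl | hx
      · exact haV
      · exact (Finset.mem_filter.mp (hBE hx)).1
    · rw [Finset.card_insert_of_notMem haB, hBcard]
    · exact ⟨a, Finset.mem_insert_self _ _, by
        rw [herase]
        exact ⟨fun x hx y hy => by rw [hBm x hx, hBm y hy],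
          fun x hx h => hda (h.trans (hBm x hx))⟩⟩
  · rintro ⟨m, B, a⟩ hp ⟨m', B', a'⟩ hp' heq
    simp only [Finset.mem_sigma, Finset.mem_product, Finset.mem_powersetCard,
      Finset.mem_sdiff] at hp hp'
    obtain ⟨hm, ⟨hBE, hBcard⟩, haV, haE⟩ := hp
    obtain ⟨hm', ⟨hBE', hBcard'⟩, haV', haE'⟩ := hp'
    have hda : d a ≠ m := fun h => haE (Finset.mem_filter.mpr ⟨haV, h⟩)
    have hda' : d a' ≠ m' := fun h => haE' (Finset.mem_filter.mpr ⟨haV', h⟩)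
    have hBm : ∀ x ∈ B, d x = m := fun x hx => (Finset.mem_filter.mp (hBE hx)).2
    have hBm' : ∀ x ∈ B', d x = m' := fun x hx => (Finset.mem_filter.mp (hBE' hx)).2
    have haB : a ∉ B := fun h => hda (hBm a h)
    have haB' : a' ∉ B' := fun h => hda' (hBm' a' h)
    simp only at heq
    have haa : a = a' := by
      by_contra hne
      have ha'mem : a' ∈ insert a B := heq ▸ Finset.mem_insert_self a' B'
      have ha'B : a' ∈ B := by
        rcases Finset.mem_insert.mp ha'mem with h | h
        · exact absurd h.symm hne
        · exact h
      -- pick b ∈ B with b ≠ a'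
      have h2 : 2 ≤ B.card := hBcard ▸ ht
      obtain ⟨b, hbB, hbne⟩ : ∃ b ∈ B, b ≠ a' := by
        have : (B.erase a').Nonempty := by
          rw [← Finset.card_pos, Finset.card_erase_of_mem ha'B]
          omega
        obtain ⟨b, hb⟩ := this
        exact ⟨b, Finset.mem_of_mem_erase hb, Finset.ne_of_mem_erase hb⟩
      have hbA' : b ∈ insert a' B' := heq ▸ Finset.mem_insert_of_mem hbB
      have hbB' : b ∈ B' := by
        rcases Finset.mem_insert.mp hbA' with h | h
        · exact absurd h hbne
        · exact h
      have : m = m' := (hBm b hbB).symm.trans (hBm' b hbB')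
      exact hda' ((hBm a' ha'B).trans this)
    subst haa
    have hBB : B = B' := by
      have := congrArg (fun s => Finset.erase s a) heq
      simpa [Finset.erase_insert haB, Finset.erase_insert haB'] using this
    subst hBB
    have hBne : B.Nonempty := Finset.card_pos.mp (by omega)
    obtain ⟨b, hb⟩ := hBne
    have : m = m' := (hBm b hb).symm.trans (hBm' b hb)
    subst this
    rfl
  · intro A hA
    obtain ⟨hApow, a, haA, hsame, hdiff⟩ := Finset.mem_filter.mp hA
    obtain ⟨hAsub, hAcard⟩ := Finset.mem_powersetCard.mp hApow
    set B := A.erase a with hB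
    have hBcard : B.card = t := by
      rw [hB, Finset.card_erase_of_mem haA, hAcard]; omega
    have hBne : B.Nonempty := Finset.card_pos.mp (by omega)
    obtain ⟨b, hbB⟩ := hBne
    set m := d b with hm
    have hBm : ∀ x ∈ B, d x = m := fun x hx => hsame x hx b hbB
    have hbV : b ∈ V' := hAsub (Finset.mem_of_mem_erase hbB)
    have haV : a ∈ V' := hAsub haA
    have hda : d a ≠ m := hdiff b hbB
    refine ⟨⟨m, B, a⟩, ?_, ?_⟩
    · simp only [Finset.mem_sigma, Finset.mem_product, Finset.mem_powersetCard,
        Finset.mem_sdiff]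
      refine ⟨Finset.mem_image.mpr ⟨b, hbV, rfl⟩, ⟨?_, hBcard⟩, haV, ?_⟩
      · intro x hx
        exact Finset.mem_filter.mpr ⟨hAsub (Finset.mem_of_mem_erase hx), hBm x hx⟩
      · intro h
        exact hda (Finset.mem_filter.mp h).2
    · simp only
      rw [hB, Finset.insert_erase haA]
end

section
/- Let K, N, t be natural numbers with 1 ≤ t and t + 1 ≤ K, and let d : Fin K → Fin N. Let C be any Finset of (t+1)-element Finsets of Fin K such that no A ∈ C has demand profile (t,1). Then for every user k : Fin K, every n : Fin N with n ≠ d k, and every t-element Finset X' of Fin K with k ∉ X', the sum ∑_{A ∈ C} Y(A) is not equal to e(n, X') + v for any v ∈ V all of whose support elements (m, X) satisfy k ∈ X. (Consequently, the keyless transmissions of the SCC_common scheme — those over sets whose demand profile is not (t,1) — leak no share to any user.) -/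
/- ### Auxiliary lemmas -/

lemma even_natCast_zmod_two {c : ℕ} (h : Even c) : (c : ZMod 2) = 0 := by
  rw [ZMod.natCast_eq_zero_iff]
  exact even_iff_two_dvd.mp h

lemma map_erase_cons {K N : ℕ} (d : Fin K → Fin N) (A : Finset (Fin K)) {x : Fin K}
    (hx : x ∈ A) : d x ::ₘ ((A.erase x).val.map d) = A.val.map d := by
  conv_rhs => rw [← Multiset.cons_erase (show x ∈ A.val from hx), Multiset.map_cons]
  rfl

lemma countP_mem_singleton {N : ℕ} (s : Multiset (Fin N)) (a : Fin N) :
    s.countP (· ∈ ({a} : Finset (Fin N))) = s.count a := by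
  induction s using Multiset.induction_on with
  | empty => simp
  | cons b s ih =>
    rw [Multiset.countP_cons, Multiset.count_cons, ih]
    simp [eq_comm]

lemma countP_mem_pair {N : ℕ} (s : Multiset (Fin N)) {a b : Fin N} (hab : a ≠ b) :
    s.countP (· ∈ ({a, b} : Finset (Fin N))) = s.count a + s.count b := by
  induction s using Multiset.induction_on with
  | empty => simp
  | cons c s ih =>
    rw [Multiset.countP_cons, Multiset.count_cons, Multiset.count_cons, ih]
    by_cases hca : a = c
    · subst hca
      rw [if_pos (Finset.mem_insert_self _ _), if_pos rfl, if_neg (fun h => hab h.symm)]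
      omega
    · by_cases hcb : b = c
      · subst hcb
        rw [if_pos (Finset.mem_insert_of_mem (Finset.mem_singleton_self _)),
          if_neg hca, if_pos rfl]
        omega
      · rw [if_neg ?_, if_neg hca, if_neg hcb]
        · omega
        · simp only [Finset.mem_insert, Finset.mem_singleton]
          push_neg
          exact ⟨fun h => hca h.symm, fun h => hcb h.symm⟩

/-- The key row computation: the "sector functional" vanishes on every row
`∑_{x ∈ A} g (d x, A.erase x)`. -/
lemma row_zero {K N : ℕ} (d : Fin K → Fin N) (k : Fin K) (E : Finset (Fin N))
    (M : Multiset (Fin N)) (W : Finset (Fin K))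
    (hkE : d k ∉ E) (hWE : ∀ w ∈ W, d w ∈ E)
    (hpar : Even (M.countP (· ∈ E)) ↔ Even W.card)
    (A : Finset (Fin K)) :
    ∑ x ∈ A, (if k ∉ A.erase x ∧ (d x ::ₘ ((A.erase x).val.map d) = M) ∧
        d x ∈ E ∧ W ⊆ A.erase x then (1 : ZMod 2) else 0) = 0 := by
  by_cases hkA : k ∈ A
  · refine Finset.sum_eq_zero fun x hx => if_neg ?_
    rintro ⟨h1, _, h3, _⟩
    by_cases hxk : x = k
    · exact hkE (hxk ▸ h3)
    · exact h1 (Finset.mem_erase.mpr ⟨fun h => hxk h.symm, hkA⟩)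
  · by_cases hM : A.val.map d = M
    · by_cases hWA : W ⊆ A
      · have hstep : ∀ x ∈ A,
            (if k ∉ A.erase x ∧ (d x ::ₘ ((A.erase x).val.map d) = M) ∧
                d x ∈ E ∧ W ⊆ A.erase x then (1 : ZMod 2) else 0) =
            (if d x ∈ E ∧ x ∉ W then (1 : ZMod 2) else 0) := by
          intro x hx
          refine if_congr ?_ rfl rfl
          rw [map_erase_cons d A hx, Finset.subset_erase]
          constructor
          · rintro ⟨_, _, h3, _, h5⟩; exact ⟨h3, h5⟩
          · rintro ⟨h3, h5⟩
            exact ⟨fun hke => hkA (Finset.mem_of_mem_erase hke), hM, h3, hWA, h5⟩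
        rw [Finset.sum_congr rfl hstep, Finset.sum_boole]
        have hfil : A.filter (fun x => d x ∈ E ∧ x ∉ W) =
            (A.filter (fun x => d x ∈ E)) \ W := by
          ext y
          simp only [Finset.mem_filter, Finset.mem_sdiff]
          tauto
        have hWsub : W ⊆ A.filter (fun x => d x ∈ E) :=
          fun w hw => Finset.mem_filter.mpr ⟨hWA hw, hWE w hw⟩
        have hcard : (A.filter (fun x => d x ∈ E)).card = M.countP (· ∈ E) := by
          rw [← hM, Multiset.countP_map]
          rfl
        rw [hfil, Finset.card_sdiff_of_subset hWsub, hcard]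
        refine even_natCast_zmod_two ?_
        rw [Nat.even_sub (hcard ▸ Finset.card_le_card hWsub)]
        exact hpar
      · refine Finset.sum_eq_zero fun x hx => if_neg ?_
        rintro ⟨_, _, _, h4⟩
        exact hWA (h4.trans (Finset.erase_subset x A))
    · refine Finset.sum_eq_zero fun x hx => if_neg ?_
      rintro ⟨_, h2, _, _⟩
      exact hM ((map_erase_cons d A hx) ▸ h2)

/-- The keyless transmissions of the `SCC_common` scheme leak no share: if no set in the
collection `C` of `(t+1)`-element sets has demand profile `(t,1)`, then for any user `k`
and any share `S_n^{X'}` with `n ≠ d k` and `k ∉ X'`, the sum of the transmissions over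
`C` is not of the form `S_n^{X'} + v` with every support share of `v` containing `k`. -/
theorem no_leak_without_profile_t1
    (K N t : ℕ) (ht : 1 ≤ t) (htK : t + 1 ≤ K) (d : Fin K → Fin N)
    (C : Finset (Finset (Fin K)))
    (hC : ∀ A ∈ C, A.card = t + 1 ∧ ¬ ProfileT1 K N d A)
    (k : Fin K) (n : Fin N) (hn : n ≠ d k)
    (X' : Finset (Fin K)) (hX' : X'.card = t) (hk : k ∉ X') :
    ¬ ∃ v : ShareSpace K N,
        (∑ A ∈ C, transmission K N d A) = share K N n X' + v ∧
        ∀ p ∈ v.support, k ∈ p.2 := by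
  rintro ⟨v, hsum, hv⟩
  -- It suffices to exhibit a separating linear functional, given by coefficients `g`.
  have key : ∃ g : Fin N × Finset (Fin K) → ZMod 2,
      g (n, X') = 1 ∧ (∀ p : Fin N × Finset (Fin K), k ∈ p.2 → g p = 0) ∧
      (∀ A ∈ C, ∑ x ∈ A, g (d x, A.erase x) = 0) := by
    by_cases hall : ∀ y ∈ X', d y = d k
    · -- degenerate case: indicator of the single coordinate `(n, X')`
      refine ⟨fun p => if p = (n, X') then 1 else 0, if_pos rfl, ?_, ?_⟩
      · intro p hp
        refine if_neg fun h => ?_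
        rw [h] at hp
        exact hk hp
      · intro A hA
        refine Finset.sum_eq_zero fun x hx => if_neg fun h => ?_
        have h1 : d x = n := (Prod.mk.injEq _ _ _ _ ▸ h).1
        have h2 : A.erase x = X' := (Prod.mk.injEq _ _ _ _ ▸ h).2
        refine (hC A hA).2 ⟨x, hx, ?_, ?_⟩
        · intro a ha b hb
          rw [h2] at ha hb
          rw [hall a ha, hall b hb]
        · intro a ha
          rw [h2] at ha
          rw [h1, hall a ha]
          exact hn
    · push_neg at hall
      obtain ⟨y0, hy0X, hy0⟩ := hall
      set M : Multiset (Fin N) := n ::ₘ X'.val.map d with hMdef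
      -- find suitable `E` and `W`
      have hEW : ∃ (E : Finset (Fin N)) (W : Finset (Fin K)),
          d k ∉ E ∧ (∀ w ∈ W, d w ∈ E) ∧
          (Even (M.countP (· ∈ E)) ↔ Even W.card) ∧ n ∈ E ∧ W ⊆ X' := by
        set cnt := (X'.val.map d).count n with hcnt
        have hcntM : M.count n = cnt + 1 := by
          rw [hMdef, Multiset.count_cons_self]
        rcases Nat.even_or_odd cnt with hce | hco
        · by_cases hc0 : cnt = 0
          · -- helper color case
            have hy0n : d y0 ≠ n := by
              intro h
              have : n ∈ X'.val.map d := Multiset.mem_map.mpr ⟨y0, hy0X, h⟩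
              rw [← Multiset.count_pos, ← hcnt, hc0] at this
              exact absurd this (by omega)
            have hq1 : 0 < (X'.val.map d).count (d y0) := by
              rw [Multiset.count_pos]
              exact Multiset.mem_map.mpr ⟨y0, hy0X, rfl⟩
            have hcp : M.countP (· ∈ ({n, d y0} : Finset (Fin N))) =
                1 + (X'.val.map d).count (d y0) := by
              rw [countP_mem_pair M (fun h => hy0n h.symm), hcntM, hc0,
                hMdef, Multiset.count_cons_of_ne hy0n]
            have hdkE : d k ∉ ({n, d y0} : Finset (Fin N)) := by
              simp only [Finset.mem_insert, Finset.mem_singleton]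
              push_neg
              exact ⟨fun h => hn h.symm, fun h => hy0 h.symm⟩
            rcases Nat.even_or_odd ((X'.val.map d).count (d y0)) with hqe | hqo
            · refine ⟨{n, d y0}, {y0}, hdkE, ?_, ?_, Finset.mem_insert_self _ _, ?_⟩
              · intro w hw
                rw [Finset.mem_singleton] at hw
                subst hw
                exact Finset.mem_insert_of_mem (Finset.mem_singleton_self _)
              · rw [hcp, Finset.card_singleton]
                have h1 := Nat.even_iff.mp hqe
                rw [Nat.even_iff, Nat.even_iff]
                omega
              · intro w hw
                rw [Finset.mem_singleton] at hw
                exact hw ▸ hy0X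
            · refine ⟨{n, d y0}, ∅, hdkE, by simp, ?_, Finset.mem_insert_self _ _,
                Finset.empty_subset _⟩
              rw [hcp, Finset.card_empty]
              have h1 := Nat.odd_iff.mp hqo
              rw [Nat.even_iff, Nat.even_iff]
              omega
          · -- marker of demand `n`
            have : n ∈ X'.val.map d := by
              rw [← Multiset.count_pos, ← hcnt]
              omega
            obtain ⟨w0, hw0X, hw0⟩ := Multiset.mem_map.mp this
            refine ⟨{n}, {w0}, ?_, ?_, ?_, Finset.mem_singleton_self _, ?_⟩
            · rw [Finset.mem_singleton]
              exact fun h => hn h.symm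
            · intro w hw
              rw [Finset.mem_singleton] at hw
              subst hw
              rw [hw0]
              exact Finset.mem_singleton_self _
            · rw [countP_mem_singleton, hcntM, Finset.card_singleton]
              have h1 := Nat.even_iff.mp hce
              rw [Nat.even_iff, Nat.even_iff]
              omega
            · intro w hw
              rw [Finset.mem_singleton] at hw
              exact hw ▸ hw0X
        · -- `cnt` odd: no marker needed
          refine ⟨{n}, ∅, ?_, by simp, ?_, Finset.mem_singleton_self _,
            Finset.empty_subset _⟩
          · rw [Finset.mem_singleton]
            exact fun h => hn h.symm
          · rw [countP_mem_singleton, hcntM, Finset.card_empty]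
            have h1 := Nat.odd_iff.mp hco
            rw [Nat.even_iff, Nat.even_iff]
            omega
      obtain ⟨E, W, hkE, hWE, hpar, hnE, hWX⟩ := hEW
      refine ⟨fun p => if k ∉ p.2 ∧ (p.1 ::ₘ p.2.val.map d = M) ∧ p.1 ∈ E ∧ W ⊆ p.2
        then 1 else 0, ?_, ?_, ?_⟩
      · exact if_pos ⟨hk, by rw [hMdef], hnE, hWX⟩
      · intro p hp
        exact if_neg fun h => h.1 hp
      · intro A _
        exact row_zero d k E M W hkE hWE hpar A
  obtain ⟨g, hg1, hg0, hgA⟩ := key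
  set φ := Finsupp.linearCombination (ZMod 2) g with hφ
  have hφs : ∀ (m : Fin N) (X : Finset (Fin K)), φ (share K N m X) = g (m, X) := by
    intro m X
    rw [hφ, share, Finsupp.linearCombination_single, one_smul]
  have h0 : φ (∑ A ∈ C, transmission K N d A) = 0 := by
    rw [map_sum]
    refine Finset.sum_eq_zero fun A hA => ?_
    rw [transmission, map_sum]
    simp only [hφs]
    exact hgA A hA
  have h1 : φ (share K N n X' + v) = 1 := by
    have hφv : φ v = 0 := by
      rw [hφ, Finsupp.linearCombination_apply, Finsupp.sum]
      exact Finset.sum_eq_zero fun p hp => by rw [hg0 p (hv p hp), smul_zero]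
    rw [map_add, hφs, hg1, hφv, add_zero]
  rw [hsum, h1] at h0
  exact absurd h0 (by decide)
end

section
/- Let K, N, t be natural numbers with 1 ≤ t and t + 1 ≤ K, let d : Fin K → Fin N, and let U be a leader set for d with U.card = N_e. Let V' := Finset.univ ∖ U, and let Δ be the number of (t+1)-element subsets of V' that have demand profile (t,1). Then the number of (t+1)-element Finsets A of Fin K such that A ∩ U ≠ ∅ or A has demand profile (t,1) equals Nat.choose K (t+1) − Nat.choose (K − N_e) (t+1) + Δ. (This is the number of transmissions made by the SCC_common scheme; the remaining Nat.choose (K − N_e) (t+1) − Δ subsets correspond to saved transmissions.) -/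
/-- The number of transmissions of the `SCC_common` scheme: the number of
`(t+1)`-element sets `A` of users with `A ∩ U ≠ ∅` or demand profile `(t,1)` equals
`C(K, t+1) - C(K - N_e, t+1) + Δ`, where `N_e = |U|` and `Δ` is the number of
`(t+1)`-element subsets of the non-leaders with demand profile `(t,1)`. -/
theorem scc_common_transmission_count
    (K N t : ℕ) (ht : 1 ≤ t) (htK : t + 1 ≤ K) (d : Fin K → Fin N)
    (U : Finset (Fin K))
    (hU_inj : Set.InjOn d U)
    (hU_img : Finset.image d U = Finset.image d Finset.univ)
    (N_e : ℕ) (hNe : U.card = N_e) :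
    (((Finset.univ : Finset (Fin K)).powersetCard (t + 1)).filter
        (fun A => A ∩ U ≠ ∅ ∨ ProfileT1 K N d A)).card =
      Nat.choose K (t + 1) - Nat.choose (K - N_e) (t + 1) +
        (((Finset.univ \ U).powersetCard (t + 1)).filter
          (fun A => ProfileT1 K N d A)).card := by
  classical
  set S := (Finset.univ : Finset (Fin K)).powersetCard (t + 1) with hS
  have hsd : ((Finset.univ \ U).powersetCard (t + 1)) =
      S.filter (fun A => A ∩ U = ∅) := by
    ext A
    simp only [hS, Finset.mem_powersetCard, Finset.mem_filter, Finset.subset_sdiff,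
      Finset.subset_univ, true_and, Finset.disjoint_iff_inter_eq_empty]
    tauto
  have hcardS : S.card = Nat.choose K (t + 1) := by
    simp [hS, Finset.card_powersetCard]
  have hcard2 : (S.filter (fun A => A ∩ U = ∅)).card = Nat.choose (K - N_e) (t + 1) := by
    rw [← hsd, Finset.card_powersetCard, Finset.card_sdiff_of_subset (Finset.subset_univ U), hNe]
    simp
  have hsplit : (S.filter (fun A => A ∩ U ≠ ∅)).card
      + (S.filter (fun A => A ∩ U = ∅)).card = S.card := by
    have := Finset.card_filter_add_card_filter_not
      (s := S) (p := fun A => A ∩ U ≠ ∅)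
    simpa using this
  have hunion : S.filter (fun A => A ∩ U ≠ ∅ ∨ ProfileT1 K N d A)
      = S.filter (fun A => A ∩ U ≠ ∅)
        ∪ S.filter (fun A => A ∩ U = ∅ ∧ ProfileT1 K N d A) := by
    ext A
    simp only [Finset.mem_union, Finset.mem_filter]
    tauto
  have hdisj : Disjoint (S.filter (fun A => A ∩ U ≠ ∅))
      (S.filter (fun A => A ∩ U = ∅ ∧ ProfileT1 K N d A)) := by
    rw [Finset.disjoint_left]
    intro A hA hA'
    rw [Finset.mem_filter] at hA hA'
    exact hA.2 hA'.2.1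
  have hΔ : (((Finset.univ \ U).powersetCard (t + 1)).filter
        (fun A => ProfileT1 K N d A)).card
      = (S.filter (fun A => A ∩ U = ∅ ∧ ProfileT1 K N d A)).card := by
    rw [hsd, Finset.filter_filter]
  rw [hunion, Finset.card_union_of_disjoint hdisj, hΔ]
  omega
end

section
/- Let K, N, t be natural numbers with N ≥ 1, K ≥ 2, and t ≤ K − 2. Working in ℚ, set M := (N * t) / (K − t) + 1. Then K * (N + M − 1) / (N + (K + 1) * (M − 1)) = (Nat.choose K (t+1) : ℚ) / ((Nat.choose K t : ℚ) − (Nat.choose (K−1) (t−1) : ℚ)), where Nat.choose (K−1) (t−1) is interpreted as 0 when t = 0. -/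
/-- The rate expression of the `SCC_keys` scheme: with `M = N t / (K - t) + 1` (in ℚ),
`K (N + M - 1) / (N + (K+1)(M - 1)) = C(K, t+1) / (C(K, t) - C(K-1, t-1))`, where
`C(K-1, t-1)` is interpreted as `0` when `t = 0`. -/
theorem scc_keys_rate_formula
    (K N t : ℕ) (hN : 1 ≤ N) (hK : 2 ≤ K) (ht : t ≤ K - 2) :
    ((K : ℚ) * ((N : ℚ) + (((N : ℚ) * (t : ℚ)) / ((K : ℚ) - (t : ℚ)) + 1) - 1)) /
        ((N : ℚ) + ((K : ℚ) + 1) * ((((N : ℚ) * (t : ℚ)) / ((K : ℚ) - (t : ℚ)) + 1) - 1)) =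
      (Nat.choose K (t + 1) : ℚ) /
        ((Nat.choose K t : ℚ) -
          (if t = 0 then (0 : ℚ) else (Nat.choose (K - 1) (t - 1) : ℚ))) := by
  have hK1 : 1 ≤ K := le_trans (by norm_num) hK
  have htK : t < K := lt_of_le_of_lt ht (by omega)
  have htK1 : t ≤ K - 1 := by omega
  have ha : (K : ℚ) - (t : ℚ) ≠ 0 := by
    have : (t : ℚ) < (K : ℚ) := by exact_mod_cast htK
    linarith
  have hNq : (N : ℚ) ≠ 0 := by positivity
  have hKq : (K : ℚ) ≠ 0 := by positivity
  have ht1 : (t : ℚ) + 1 ≠ 0 := by positivity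
  -- LHS = K / (t+1)
  have hL : ((K : ℚ) * ((N : ℚ) + (((N : ℚ) * (t : ℚ)) / ((K : ℚ) - (t : ℚ)) + 1) - 1)) /
        ((N : ℚ) + ((K : ℚ) + 1) * ((((N : ℚ) * (t : ℚ)) / ((K : ℚ) - (t : ℚ)) + 1) - 1)) =
      (K : ℚ) / ((t : ℚ) + 1) := by
    have h1 : (N : ℚ) + (((N : ℚ) * (t : ℚ)) / ((K : ℚ) - (t : ℚ)) + 1) - 1
        = (N : ℚ) * (K : ℚ) / ((K : ℚ) - (t : ℚ)) := by
      field_simp; ring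
    have h2 : (N : ℚ) + ((K : ℚ) + 1) * ((((N : ℚ) * (t : ℚ)) / ((K : ℚ) - (t : ℚ)) + 1) - 1)
        = (N : ℚ) * (K : ℚ) * ((t : ℚ) + 1) / ((K : ℚ) - (t : ℚ)) := by
      field_simp; ring
    rw [h1, h2]
    field_simp
  rw [hL]
  -- Pascal: denominator = C(K-1, t)
  have hpascal : (Nat.choose K t : ℚ) -
      (if t = 0 then (0 : ℚ) else (Nat.choose (K - 1) (t - 1) : ℚ))
      = (Nat.choose (K - 1) t : ℚ) := by
    rcases t with _ | s
    · simp
    · simp only [if_neg (Nat.succ_ne_zero s), Nat.succ_sub_one]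
      have h : Nat.choose K (s + 1) = Nat.choose (K - 1) s + Nat.choose (K - 1) (s + 1) := by
        have := Nat.choose_succ_succ (K - 1) s
        simp only [Nat.succ_eq_add_one] at this
        rwa [show K - 1 + 1 = K by omega] at this
      rw [h]
      push_cast
      ring
  rw [hpascal]
  -- C(K, t+1) * (t+1) = K * C(K-1, t)
  have hkey : (Nat.choose K (t + 1) : ℚ) * ((t : ℚ) + 1) = (K : ℚ) * (Nat.choose (K - 1) t : ℚ) := by
    have := Nat.add_one_mul_choose_eq (K - 1) t
    rw [show K - 1 + 1 = K by omega] at this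
    exact_mod_cast this.symm
  have hcne : (Nat.choose (K - 1) t : ℚ) ≠ 0 := by
    exact_mod_cast (Nat.choose_pos htK1).ne'
  rw [div_eq_div_iff ht1 hcne] at *
  linarith [hkey]
end
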